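/- arXiv:2603.09167 — 9 statements merged into one kernel-verified Lean document; each statement's English description precedes it below -/
import Mathlib

section
/- For α > 1 and fixed q ∈ [0,1], the Rényi divergence D_α(Ber(p)‖Ber(q)) as a function of p is non-increasing on [0, q] and non-decreasing on [q, 1]. -/
open scoped ENNReal

/-- Rényi divergence of order `α` between finitely supported distributions, using the
convention `0 ^ (1-α) = ∞` for `α > 1` (so non-absolutely-continuous pairs get `⊤`). -/
noncomputable def renyiDiv {X : Type*} [Fintype X] (α : ℝ) (P Q : X → ℝ≥0∞) : EReal :=
  ((α - 1)⁻¹ : ℝ) * ENNReal.log (∑ x, P x ^ α * Q x ^ (1 - α))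

/-- `P` is a probability mass function. -/
def IsPMF {X : Type*} [Fintype X] (P : X → ℝ≥0∞) : Prop := ∑ x, P x = 1

/-- δ-approximate Rényi divergence of order α. -/
noncomputable def approxRenyiDiv {X : Type*} [Fintype X] (α δ : ℝ) (P Q : X → ℝ≥0∞) :
    EReal :=
  sInf { d : EReal | ∃ P' P'' Q' Q'' : X → ℝ≥0∞,
    IsPMF P' ∧ IsPMF P'' ∧ IsPMF Q' ∧ IsPMF Q'' ∧
    (∀ x, P x = ENNReal.ofReal (1 - δ) * P' x + ENNReal.ofReal δ * P'' x) ∧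
    (∀ x, Q x = ENNReal.ofReal (1 - δ) * Q' x + ENNReal.ofReal δ * Q'' x) ∧
    d = renyiDiv α P' Q' }

/-- The Bernoulli distribution on `Bool`. -/
noncomputable def Ber (p : ℝ) : Bool → ℝ≥0∞ :=
  fun b => if b then ENNReal.ofReal p else ENNReal.ofReal (1 - p)

lemma Ber_true (p : ℝ) : Ber p true = ENNReal.ofReal p := rfl
lemma Ber_false (p : ℝ) : Ber p false = ENNReal.ofReal (1 - p) := rfl

lemma renyi_mono_of_sum_le {α : ℝ} (hα : 1 < α) {P1 P2 Q : Bool → ℝ≥0∞}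
    (h : ∑ x, P1 x ^ α * Q x ^ (1 - α) ≤ ∑ x, P2 x ^ α * Q x ^ (1 - α)) :
    renyiDiv α P1 Q ≤ renyiDiv α P2 Q := by
  unfold renyiDiv
  refine mul_le_mul_of_nonneg_left (ENNReal.log_monotone h) ?_
  exact EReal.coe_nonneg.mpr (inv_nonneg.mpr (by linarith))

lemma g_hasDerivAt {α : ℝ} (hα : 1 < α) (A B p : ℝ) :
    HasDerivAt (fun p : ℝ => p ^ α * A + (1 - p) ^ α * B)
      (α * p ^ (α - 1) * A - α * (1 - p) ^ (α - 1) * B) p := by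
  have h1 : HasDerivAt (fun p : ℝ => p ^ α) (α * p ^ (α - 1)) p :=
    Real.hasDerivAt_rpow_const (Or.inr hα.le)
  have h2 : HasDerivAt (fun p : ℝ => (1 - p) ^ α) (α * (1 - p) ^ (α - 1) * (0 - 1)) p := by
    exact (Real.hasDerivAt_rpow_const (x := 1 - p) (p := α) (Or.inr hα.le)).comp p
      ((hasDerivAt_const p (1:ℝ)).sub (hasDerivAt_id p))
  have := (h1.mul_const A).add (h2.mul_const B)
  exact this.congr_deriv (by ring)

lemma sum_eq_ofReal {α p q : ℝ} (hα : 1 < α) (hp0 : 0 ≤ p) (hp1 : p ≤ 1)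
    (hq0 : 0 < q) (hq1 : q < 1) :
    ∑ x, Ber p x ^ α * Ber q x ^ (1 - α) =
      ENNReal.ofReal (p ^ α * q ^ (1 - α) + (1 - p) ^ α * (1 - q) ^ (1 - α)) := by
  have hαpos : (0:ℝ) < α := by linarith
  have e1 : ENNReal.ofReal p ^ α = ENNReal.ofReal (p ^ α) :=
    ENNReal.ofReal_rpow_of_nonneg hp0 hαpos.le
  have e2 : ENNReal.ofReal q ^ (1 - α) = ENNReal.ofReal (q ^ (1 - α)) :=
    ENNReal.ofReal_rpow_of_pos hq0
  have e3 : ENNReal.ofReal (1 - p) ^ α = ENNReal.ofReal ((1 - p) ^ α) :=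
    ENNReal.ofReal_rpow_of_nonneg (by linarith) hαpos.le
  have e4 : ENNReal.ofReal (1 - q) ^ (1 - α) = ENNReal.ofReal ((1 - q) ^ (1 - α)) :=
    ENNReal.ofReal_rpow_of_pos (by linarith)
  rw [Fintype.sum_bool, Ber_true, Ber_false, Ber_true, Ber_false, e1, e2, e3, e4,
    ← ENNReal.ofReal_mul (Real.rpow_nonneg hp0 _),
    ← ENNReal.ofReal_mul (Real.rpow_nonneg (by linarith) _),
    ← ENNReal.ofReal_add (mul_nonneg (Real.rpow_nonneg hp0 _) (Real.rpow_nonneg hq0.le _))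
      (mul_nonneg (Real.rpow_nonneg (by linarith) _) (Real.rpow_nonneg (by linarith) _))]

/-- For α > 1 and fixed q ∈ [0,1], p ↦ D_α(Ber(p)‖Ber(q)) is non-increasing on [0,q]
and non-decreasing on [q,1]. -/
theorem stmt1 (α q : ℝ) (hα : 1 < α) (hq : q ∈ Set.Icc (0:ℝ) 1) :
    AntitoneOn (fun p => renyiDiv α (Ber p) (Ber q)) (Set.Icc 0 q) ∧
    MonotoneOn (fun p => renyiDiv α (Ber p) (Ber q)) (Set.Icc q 1) := by
  obtain ⟨hq0, hq1⟩ := hq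
  have hαpos : (0:ℝ) < α := by linarith
  have hneg : (1:ℝ) - α < 0 := by linarith
  rcases eq_or_lt_of_le hq0 with h0 | h0
  · -- q = 0
    subst h0
    constructor
    · intro p1 h1 p2 h2 _
      simp only [Set.Icc_self, Set.mem_singleton_iff] at h1 h2
      rw [h1, h2]
    · intro p1 h1 p2 h2 h12
      refine renyi_mono_of_sum_le hα ?_
      have key : ∀ p : ℝ, ∑ x, Ber p x ^ α * Ber (0:ℝ) x ^ (1 - α) =
          ENNReal.ofReal p ^ α * ⊤ + ENNReal.ofReal (1 - p) ^ α := by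
        intro p
        rw [Fintype.sum_bool, Ber_true, Ber_false, Ber_true, Ber_false]
        rw [ENNReal.ofReal_zero, ENNReal.zero_rpow_of_neg hneg, sub_zero,
          ENNReal.ofReal_one, ENNReal.one_rpow, mul_one]
      rw [key, key]
      rcases eq_or_lt_of_le h2.1 with h | h
      · have hp1 : p1 = 0 := le_antisymm (h ▸ h12) h1.1
        rw [hp1, ← h]
      · have : ENNReal.ofReal p2 ^ α * ⊤ = ⊤ := by
          refine ENNReal.mul_top ?_
          simp [ENNReal.rpow_eq_zero_iff, ENNReal.ofReal_eq_zero, not_le.mpr h, hαpos,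
            ENNReal.ofReal_ne_top]
        rw [this, top_add]
        exact le_top
  rcases eq_or_lt_of_le hq1 with h1' | h1'
  · -- q = 1
    subst h1'
    constructor
    · intro p1 hp1 p2 hp2 h12
      refine renyi_mono_of_sum_le hα ?_
      have key : ∀ p : ℝ, ∑ x, Ber p x ^ α * Ber (1:ℝ) x ^ (1 - α) =
          ENNReal.ofReal p ^ α + ENNReal.ofReal (1 - p) ^ α * ⊤ := by
        intro p
        rw [Fintype.sum_bool, Ber_true, Ber_false, Ber_true, Ber_false]
        rw [sub_self, ENNReal.ofReal_zero, ENNReal.zero_rpow_of_neg hneg,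
          ENNReal.ofReal_one, ENNReal.one_rpow, mul_one]
      rw [key, key]
      rcases eq_or_lt_of_le hp1.2 with h | h
      · have hp2' : p2 = 1 := le_antisymm hp2.2 (h ▸ h12)
        rw [hp2', ← h]
      · have : ENNReal.ofReal (1 - p1) ^ α * ⊤ = ⊤ := by
          refine ENNReal.mul_top ?_
          simp [ENNReal.rpow_eq_zero_iff, ENNReal.ofReal_eq_zero, hαpos,
            not_le.mpr (by linarith : (0:ℝ) < 1 - p1)]
        rw [this, add_top]
        exact le_top
    · intro p1 h1 p2 h2 _
      have heq : Set.Icc (1:ℝ) 1 = {1} := Set.Icc_self 1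
      rw [heq, Set.mem_singleton_iff] at h1 h2
      rw [h1, h2]
  -- 0 < q < 1
  set A := q ^ (1 - α) with hA
  set B := (1 - q) ^ (1 - α) with hB
  set g : ℝ → ℝ := fun p => p ^ α * A + (1 - p) ^ α * B with hg
  have hApos : 0 < A := Real.rpow_pos_of_pos h0 _
  have hBpos : 0 < B := Real.rpow_pos_of_pos (by linarith) _
  have hqA : q ^ (α - 1) * A = 1 := by
    rw [hA, ← Real.rpow_add h0]; norm_num
  have hqB : (1 - q) ^ (α - 1) * B = 1 := by
    rw [hB, ← Real.rpow_add (by linarith : (0:ℝ) < 1 - q)]; norm_num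
  have hcont : Continuous g := by
    apply Continuous.add
    · exact (Real.continuous_rpow_const hαpos.le).mul continuous_const
    · exact ((Real.continuous_rpow_const hαpos.le).comp
        (continuous_const.sub continuous_id)).mul continuous_const
  have hderiv : ∀ p : ℝ, deriv g p = α * p ^ (α - 1) * A - α * (1 - p) ^ (α - 1) * B :=
    fun p => (g_hasDerivAt hα A B p).deriv
  have hdiff : Differentiable ℝ g := fun p => (g_hasDerivAt hα A B p).differentiableAt
  have hanti : AntitoneOn g (Set.Icc 0 q) := by
    apply antitoneOn_of_deriv_nonpos (convex_Icc 0 q) hcont.continuousOn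
      (hdiff.differentiableOn)
    intro x hx
    rw [interior_Icc] at hx
    obtain ⟨hxa, hxb⟩ := hx
    rw [hderiv]
    have hr1 : x ^ (α - 1) ≤ q ^ (α - 1) :=
      Real.rpow_le_rpow hxa.le hxb.le (by linarith)
    have hx1 : x ^ (α - 1) * A ≤ 1 := by
      calc x ^ (α - 1) * A ≤ q ^ (α - 1) * A := mul_le_mul_of_nonneg_right hr1 hApos.le
        _ = 1 := hqA
    have hr2 : (1 - q) ^ (α - 1) ≤ (1 - x) ^ (α - 1) :=
      Real.rpow_le_rpow (by linarith) (by linarith) (by linarith)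
    have hx2 : (1:ℝ) ≤ (1 - x) ^ (α - 1) * B := by
      calc (1:ℝ) = (1 - q) ^ (α - 1) * B := hqB.symm
        _ ≤ (1 - x) ^ (α - 1) * B := mul_le_mul_of_nonneg_right hr2 hBpos.le
    nlinarith
  have hmono : MonotoneOn g (Set.Icc q 1) := by
    apply monotoneOn_of_deriv_nonneg (convex_Icc q 1) hcont.continuousOn
      (hdiff.differentiableOn)
    intro x hx
    rw [interior_Icc] at hx
    obtain ⟨hxa, hxb⟩ := hx
    rw [hderiv]
    have hr1 : q ^ (α - 1) ≤ x ^ (α - 1) :=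
      Real.rpow_le_rpow h0.le hxa.le (by linarith)
    have hx1 : (1:ℝ) ≤ x ^ (α - 1) * A := by
      calc (1:ℝ) = q ^ (α - 1) * A := hqA.symm
        _ ≤ x ^ (α - 1) * A := mul_le_mul_of_nonneg_right hr1 hApos.le
    have hr2 : (1 - x) ^ (α - 1) ≤ (1 - q) ^ (α - 1) :=
      Real.rpow_le_rpow (by linarith) (by linarith) (by linarith)
    have hx2 : (1 - x) ^ (α - 1) * B ≤ 1 := by
      calc (1 - x) ^ (α - 1) * B ≤ (1 - q) ^ (α - 1) * B := mul_le_mul_of_nonneg_right hr2 hBpos.le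
        _ = 1 := hqB
    nlinarith
  constructor
  · intro p1 hp1 p2 hp2 h12
    refine renyi_mono_of_sum_le hα ?_
    rw [sum_eq_ofReal hα hp1.1 (le_trans hp1.2 hq1) h0 h1',
      sum_eq_ofReal hα hp2.1 (le_trans hp2.2 hq1) h0 h1']
    exact ENNReal.ofReal_le_ofReal (hanti hp1 hp2 h12)
  · intro p1 hp1 p2 hp2 h12
    refine renyi_mono_of_sum_le hα ?_
    rw [sum_eq_ofReal hα (le_trans h0.le hp1.1) hp1.2 h0 h1',
      sum_eq_ofReal hα (le_trans h0.le hp2.1) hp2.2 h0 h1']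
    exact ENNReal.ofReal_le_ofReal (hmono hp1 hp2 h12)
end

section
/- For α > 1, the Rényi divergence D_α(P‖Q) between probability distributions P, Q on a common space is jointly quasi-convex in the pair (P, Q): for any distributions P₀, P₁, Q₀, Q₁ and λ ∈ [0,1], D_α(λP₀+(1−λ)P₁ ‖ λQ₀+(1−λ)Q₁) ≤ max{D_α(P₀‖Q₀), D_α(P₁‖Q₁)}. -/
open scoped ENNReal

lemma hpow_aux {α : ℝ} (v : ℝ≥0∞) (hv0 : v ≠ 0) (hvt : v ≠ ⊤) :
    v ^ (1 - α) = v * (v ^ α)⁻¹ := by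
  rw [show (1 - α) = 1 + (-α) by ring, ENNReal.rpow_add _ _ hv0 hvt, ENNReal.rpow_one,
    ENNReal.rpow_neg]

/-- Joint convexity (subadditivity form) of `(u, v) ↦ u ^ α * v ^ (1 - α)` for `α > 1`. -/
lemma key2 {α : ℝ} (hα : 1 < α) (u₀ u₁ v₀ v₁ : ℝ≥0∞)
    (hu₀ : u₀ ≠ ⊤) (hu₁ : u₁ ≠ ⊤) (hv₀ : v₀ ≠ ⊤) (hv₁ : v₁ ≠ ⊤) :
    (u₀ + u₁) ^ α * (v₀ + v₁) ^ (1 - α)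
      ≤ u₀ ^ α * v₀ ^ (1 - α) + u₁ ^ α * v₁ ^ (1 - α) := by
  have hαpos : (0:ℝ) < α := lt_trans one_pos hα
  have h1α : (1 - α) < 0 := by linarith
  rcases eq_or_ne v₀ 0 with h0 | hv0
  · rcases eq_or_ne u₀ 0 with h0u | hu0
    · simp [h0, h0u, ENNReal.zero_rpow_of_pos hαpos]
    · have : u₀ ^ α * v₀ ^ (1 - α) = ⊤ := by
        rw [h0, ENNReal.zero_rpow_of_neg h1α, ENNReal.mul_top]
        simp [ENNReal.rpow_eq_zero_iff, hu0, hu₀, hαpos, not_lt.2 hαpos.le]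
      simp [this]
  rcases eq_or_ne v₁ 0 with h1 | hv1
  · rcases eq_or_ne u₁ 0 with h1u | hu1
    · simp [h1, h1u, ENNReal.zero_rpow_of_pos hαpos]
    · have : u₁ ^ α * v₁ ^ (1 - α) = ⊤ := by
        rw [h1, ENNReal.zero_rpow_of_neg h1α, ENNReal.mul_top]
        simp [ENNReal.rpow_eq_zero_iff, hu1, hu₁, hαpos, not_lt.2 hαpos.le]
      simp [this]
  -- main case
  set s := v₀ + v₁ with hs
  have hs0 : s ≠ 0 := by simp [hs, hv0]
  have hst : s ≠ ⊤ := by simp [hs, ENNReal.add_ne_top, hv₀, hv₁]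
  have hw : v₀ / s + v₁ / s = 1 := by
    rw [ENNReal.div_add_div_same, ENNReal.div_self hs0 hst]
  have H := ENNReal.rpow_arith_mean_le_arith_mean2_rpow (v₀ / s) (v₁ / s)
    (u₀ / v₀) (u₁ / v₁) hw hα.le
  have wz₀ : v₀ / s * (u₀ / v₀) = u₀ / s := by
    rw [div_eq_mul_inv, div_eq_mul_inv, div_eq_mul_inv,
      show v₀ * s⁻¹ * (u₀ * v₀⁻¹) = (v₀ * v₀⁻¹) * (u₀ * s⁻¹) by ring,
      ENNReal.mul_inv_cancel hv0 hv₀, one_mul]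
  have wz₁ : v₁ / s * (u₁ / v₁) = u₁ / s := by
    rw [div_eq_mul_inv, div_eq_mul_inv, div_eq_mul_inv,
      show v₁ * s⁻¹ * (u₁ * v₁⁻¹) = (v₁ * v₁⁻¹) * (u₁ * s⁻¹) by ring,
      ENNReal.mul_inv_cancel hv1 hv₁, one_mul]
  have hterm : ∀ u v : ℝ≥0∞, v ≠ 0 → v ≠ ⊤ →
      v / s * (u / v) ^ α * s = u ^ α * v ^ (1 - α) := by
    intro u v hv hvt
    rw [ENNReal.div_rpow_of_nonneg _ _ hαpos.le, hpow_aux v hv hvt,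
      div_eq_mul_inv, div_eq_mul_inv,
      show v * s⁻¹ * (u ^ α * (v ^ α)⁻¹) * s = (s⁻¹ * s) * (u ^ α * (v * (v ^ α)⁻¹)) by ring,
      ENNReal.inv_mul_cancel hs0 hst, one_mul]
  calc (u₀ + u₁) ^ α * s ^ (1 - α)
      = ((u₀ + u₁) / s) ^ α * s := by
        rw [ENNReal.div_rpow_of_nonneg _ _ hαpos.le, hpow_aux s hs0 hst, div_eq_mul_inv]
        ring
    _ = (v₀ / s * (u₀ / v₀) + v₁ / s * (u₁ / v₁)) ^ α * s := by
        rw [wz₀, wz₁, ENNReal.div_add_div_same]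
    _ ≤ (v₀ / s * (u₀ / v₀) ^ α + v₁ / s * (u₁ / v₁) ^ α) * s := mul_le_mul_left H s
    _ = v₀ / s * (u₀ / v₀) ^ α * s + v₁ / s * (u₁ / v₁) ^ α * s := add_mul _ _ _
    _ = u₀ ^ α * v₀ ^ (1 - α) + u₁ ^ α * v₁ ^ (1 - α) := by
        rw [hterm u₀ v₀ hv0 hv₀, hterm u₁ v₁ hv1 hv₁]

lemma scale_aux {α : ℝ} {lam : ℝ≥0∞} (hl0 : lam ≠ 0) (hlt : lam ≠ ⊤)
    {p q : ℝ≥0∞} (hp : p ≠ ⊤) (hq : q ≠ ⊤) :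
    (lam * p) ^ α * (lam * q) ^ (1 - α) = lam * (p ^ α * q ^ (1 - α)) := by
  rw [ENNReal.mul_rpow_of_ne_top hlt hp, ENNReal.mul_rpow_of_ne_top hlt hq,
    show lam ^ α * p ^ α * (lam ^ (1 - α) * q ^ (1 - α))
      = (lam ^ α * lam ^ (1 - α)) * (p ^ α * q ^ (1 - α)) by ring,
    ← ENNReal.rpow_add _ _ hl0 hlt, show α + (1 - α) = 1 by ring, ENNReal.rpow_one]

lemma pt_aux {α : ℝ} (hα : 1 < α) {lam mu : ℝ≥0∞} (hl0 : lam ≠ 0) (hlt : lam ≠ ⊤)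
    (hm0 : mu ≠ 0) (hmt : mu ≠ ⊤)
    {p₀ p₁ q₀ q₁ : ℝ≥0∞} (hp₀ : p₀ ≠ ⊤) (hp₁ : p₁ ≠ ⊤) (hq₀ : q₀ ≠ ⊤) (hq₁ : q₁ ≠ ⊤) :
    (lam * p₀ + mu * p₁) ^ α * (lam * q₀ + mu * q₁) ^ (1 - α)
      ≤ lam * (p₀ ^ α * q₀ ^ (1 - α)) + mu * (p₁ ^ α * q₁ ^ (1 - α)) := by
  calc (lam * p₀ + mu * p₁) ^ α * (lam * q₀ + mu * q₁) ^ (1 - α)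
      ≤ (lam * p₀) ^ α * (lam * q₀) ^ (1 - α) + (mu * p₁) ^ α * (mu * q₁) ^ (1 - α) :=
        key2 hα _ _ _ _ (ENNReal.mul_ne_top hlt hp₀) (ENNReal.mul_ne_top hmt hp₁)
          (ENNReal.mul_ne_top hlt hq₀) (ENNReal.mul_ne_top hmt hq₁)
    _ = lam * (p₀ ^ α * q₀ ^ (1 - α)) + mu * (p₁ ^ α * q₁ ^ (1 - α)) := by
        rw [scale_aux hl0 hlt hp₀ hq₀, scale_aux hm0 hmt hp₁ hq₁]

/-- Joint quasi-convexity of the Rényi divergence of order α > 1. -/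
theorem stmt2 {Ω : Type*} [Fintype Ω] (α : ℝ) (hα : 1 < α)
    (P₀ P₁ Q₀ Q₁ : Ω → ℝ≥0∞) (hP₀ : IsPMF P₀) (hP₁ : IsPMF P₁)
    (hQ₀ : IsPMF Q₀) (hQ₁ : IsPMF Q₁) (l : ℝ) (hl : l ∈ Set.Icc (0:ℝ) 1) :
    renyiDiv α (fun x => ENNReal.ofReal l * P₀ x + ENNReal.ofReal (1 - l) * P₁ x)
      (fun x => ENNReal.ofReal l * Q₀ x + ENNReal.ofReal (1 - l) * Q₁ x)
      ≤ max (renyiDiv α P₀ Q₀) (renyiDiv α P₁ Q₁) := by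
  obtain ⟨hl0, hl1⟩ := hl
  have hfin : ∀ (P : Ω → ℝ≥0∞), IsPMF P → ∀ x, P x ≠ ⊤ := by
    intro P hP x
    refine ne_top_of_le_ne_top ENNReal.one_ne_top ?_
    rw [← hP]
    exact Finset.single_le_sum (fun i _ => zero_le) (Finset.mem_univ x)
  rcases eq_or_lt_of_le hl0 with h0 | h0
  · simp only [← h0, ENNReal.ofReal_zero, zero_mul, zero_add, sub_zero,
      ENNReal.ofReal_one, one_mul]
    exact le_max_right _ _
  rcases eq_or_lt_of_le hl1 with h1 | h1
  · simp only [h1, ENNReal.ofReal_one, one_mul, sub_self, ENNReal.ofReal_zero,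
      zero_mul, add_zero]
    exact le_max_left _ _
  set lam := ENNReal.ofReal l with hlam
  set mu := ENNReal.ofReal (1 - l) with hmu
  have hlam0 : lam ≠ 0 := by simp [hlam, ENNReal.ofReal_eq_zero, not_le, h0]
  have hlamt : lam ≠ ⊤ := ENNReal.ofReal_ne_top
  have hmu0 : mu ≠ 0 := by
    rw [hmu, Ne, ENNReal.ofReal_eq_zero, not_le]
    linarith
  have hmut : mu ≠ ⊤ := ENNReal.ofReal_ne_top
  have hone : lam + mu = 1 := by
    rw [hlam, hmu, ← ENNReal.ofReal_add hl0 (by linarith), show l + (1 - l) = 1 by ring,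
      ENNReal.ofReal_one]
  have hsum : (∑ x, (lam * P₀ x + mu * P₁ x) ^ α * (lam * Q₀ x + mu * Q₁ x) ^ (1 - α))
      ≤ max (∑ x, P₀ x ^ α * Q₀ x ^ (1 - α)) (∑ x, P₁ x ^ α * Q₁ x ^ (1 - α)) := by
    calc (∑ x, (lam * P₀ x + mu * P₁ x) ^ α * (lam * Q₀ x + mu * Q₁ x) ^ (1 - α))
        ≤ ∑ x, (lam * (P₀ x ^ α * Q₀ x ^ (1 - α)) + mu * (P₁ x ^ α * Q₁ x ^ (1 - α))) :=
          Finset.sum_le_sum fun x _ => pt_aux hα hlam0 hlamt hmu0 hmut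
            (hfin P₀ hP₀ x) (hfin P₁ hP₁ x) (hfin Q₀ hQ₀ x) (hfin Q₁ hQ₁ x)
      _ = lam * (∑ x, P₀ x ^ α * Q₀ x ^ (1 - α)) + mu * (∑ x, P₁ x ^ α * Q₁ x ^ (1 - α)) := by
          rw [Finset.sum_add_distrib, ← Finset.mul_sum, ← Finset.mul_sum]
      _ ≤ lam * (max (∑ x, P₀ x ^ α * Q₀ x ^ (1 - α)) (∑ x, P₁ x ^ α * Q₁ x ^ (1 - α)))
          + mu * (max (∑ x, P₀ x ^ α * Q₀ x ^ (1 - α)) (∑ x, P₁ x ^ α * Q₁ x ^ (1 - α))) :=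
          add_le_add (mul_le_mul_right (le_max_left _ _) _)
            (mul_le_mul_right (le_max_right _ _) _)
      _ = _ := by rw [← add_mul, hone, one_mul]
  have hc : ((0:ℝ) : EReal) ≤ ((α - 1)⁻¹ : ℝ) := by
    exact_mod_cast inv_nonneg.2 (by linarith : (0:ℝ) ≤ α - 1)
  simp only [renyiDiv]
  rcases le_total (∑ x, P₀ x ^ α * Q₀ x ^ (1 - α)) (∑ x, P₁ x ^ α * Q₁ x ^ (1 - α)) with h | h
  · refine le_trans ?_ (le_max_right _ _)
    refine mul_le_mul_of_nonneg_left (ENNReal.log_monotone ?_) hc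
    exact le_trans hsum (by rw [max_eq_right h])
  · refine le_trans ?_ (le_max_left _ _)
    refine mul_le_mul_of_nonneg_left (ENNReal.log_monotone ?_) hc
    exact le_trans hsum (by rw [max_eq_left h])
end

section
/- Let P ~ Ber(p), Q ~ Ber(q), δ ∈ [0,1), and α > 1. Then the δ-approximate Rényi divergence satisfies: D_α^δ(P‖Q) = D_α(Ber(p/(1−δ))‖Ber((q−δ)/(1−δ))) if p < q−δ; D_α^δ(P‖Q) = D_α(Ber((p−δ)/(1−δ))‖Ber(q/(1−δ))) if p > q+δ; and D_α^δ(P‖Q) = 0 if |p−q| ≤ δ. -/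
open scoped ENNReal

/-- Bernoulli for exponent ≥ 1. -/
lemma bern1 {u α : ℝ} (hα : 1 ≤ α) (hu : 0 ≤ u) : 1 + α * (u - 1) ≤ u ^ α := by
  have h := one_add_mul_self_le_rpow_one_add (by linarith : (-1:ℝ) ≤ u - 1) hα
  have e : 1 + (u - 1) = u := by ring
  rwa [e] at h

/-- Bernoulli for negative exponents. -/
lemma bern_neg {u β : ℝ} (hβ : 0 < β) (hu : 0 < u) : 1 - β * (u - 1) ≤ u ^ (-β) := by
  rcases le_or_gt (1 - β * (u - 1)) 0 with h | h
  · exact h.trans (Real.rpow_pos_of_pos hu _).le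
  rcases le_or_gt β 1 with hβ1 | hβ1
  · have hB : u ^ β ≤ 1 + β * (u - 1) := by
      have h' := rpow_one_add_le_one_add_mul_self (by linarith : (-1:ℝ) ≤ u - 1) hβ.le hβ1
      have e : 1 + (u - 1) = u := by ring
      rwa [e] at h'
    have hupos : (0:ℝ) < u ^ β := Real.rpow_pos_of_pos hu β
    have key : (1 - β * (u - 1)) * u ^ β ≤ 1 := by nlinarith [sq_nonneg (β * (u - 1))]
    have h2 : 1 - β * (u - 1) ≤ 1 / u ^ β := (le_div_iff₀ hupos).mpr key
    rwa [Real.rpow_neg hu.le, ← one_div]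
  · have hs : (-1:ℝ) ≤ u⁻¹ - 1 := by
      have : 0 < u⁻¹ := inv_pos.mpr hu
      linarith
    have hB := one_add_mul_self_le_rpow_one_add hs hβ1.le
    have e : 1 + (u⁻¹ - 1) = u⁻¹ := by ring
    rw [e] at hB
    have e2 : (u⁻¹) ^ β = u ^ (-β) := by
      rw [Real.inv_rpow hu.le, Real.rpow_neg hu.le]
    rw [e2] at hB
    have hui : u * u⁻¹ = 1 := mul_inv_cancel₀ hu.ne'
    have key : 1 - β * (u - 1) ≤ 1 + β * (u⁻¹ - 1) := by
      nlinarith [mul_nonneg (mul_nonneg hβ.le (sq_nonneg (u - 1))) (inv_pos.mpr hu).le]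
    linarith

/-- Gradient inequality for convex `x ^ α`, `α ≥ 1`. -/
lemma grad_pos {x y α : ℝ} (hα : 1 ≤ α) (hx : 0 ≤ x) (hy : 0 < y) :
    y ^ α + α * y ^ (α - 1) * (x - y) ≤ x ^ α := by
  have hu : 0 ≤ x / y := div_nonneg hx hy.le
  have hB := bern1 hα hu
  have hyα : 0 < y ^ α := Real.rpow_pos_of_pos hy α
  have h := mul_le_mul_of_nonneg_right hB hyα.le
  have e : (x / y) ^ α * y ^ α = x ^ α := by
    rw [Real.div_rpow hx hy.le]
    field_simp
  rw [e] at h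
  have e2 : y ^ (α - 1) * y = y ^ α := by
    rw [← Real.rpow_add_one hy.ne' (α - 1)]
    ring_nf
  have e3 : x / y * y = x := div_mul_cancel₀ x hy.ne'
  have e5 : (1 + α * (x / y - 1)) * (y ^ (α - 1) * y)
      = y ^ (α - 1) * y + α * y ^ (α - 1) * (x / y * y) - α * (y ^ (α - 1) * y) := by ring
  rw [e2, e3] at e5
  have e6 : α * (y ^ (α - 1) * y) = α * y ^ α := by rw [e2]
  linarith [h, e5, e6]

/-- Gradient inequality for convex `x ^ (1 - α)`, `α > 1`. -/
lemma grad_neg {x y α : ℝ} (hα : 1 < α) (hx : 0 < x) (hy : 0 < y) :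
    x ^ (1 - α) + (1 - α) * x ^ (-α) * (y - x) ≤ y ^ (1 - α) := by
  have hβ : 0 < α - 1 := by linarith
  have hu : 0 < y / x := div_pos hy hx
  have hB := bern_neg hβ hu
  have e : -(α - 1) = 1 - α := by ring
  rw [e] at hB
  have hx1 : (0:ℝ) < x ^ (1 - α) := Real.rpow_pos_of_pos hx _
  have h := mul_le_mul_of_nonneg_left hB hx1.le
  have e2 : x ^ (1 - α) * (y / x) ^ (1 - α) = y ^ (1 - α) := by
    rw [Real.div_rpow hy.le hx.le]
    field_simp
  rw [e2] at h
  have e3 : x ^ (-α) * x = x ^ (1 - α) := by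
    rw [← Real.rpow_add_one hx.ne' (-α)]
    ring_nf
  have e4 : y / x * x = y := div_mul_cancel₀ y hx.ne'
  have e5 : (x ^ (-α) * x) * (1 - (α - 1) * (y / x - 1))
      = x ^ (-α) * x - (α - 1) * x ^ (-α) * (y / x * x) + (α - 1) * (x ^ (-α) * x) := by ring
  rw [e3, e4] at e5
  have e6 : (α - 1) * (x ^ (-α) * x) = (α - 1) * x ^ (1 - α) := by rw [e3]
  linarith [h, e5, e6]
/-- The real-valued Rényi sum between two Bernoulli parameters. -/
noncomputable def gR (α a b : ℝ) : ℝ :=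
  a ^ α * b ^ (1 - α) + (1 - a) ^ α * (1 - b) ^ (1 - α)

lemma gR_self {α b : ℝ} (hb0 : 0 < b) (hb1 : b < 1) : gR α b b = 1 := by
  have h1b : (0:ℝ) < 1 - b := by linarith
  have e : α + (1 - α) = 1 := by ring
  have e1 : b ^ α * b ^ (1 - α) = b := by
    rw [← Real.rpow_add hb0, e, Real.rpow_one]
  have e2 : (1 - b) ^ α * (1 - b) ^ (1 - α) = 1 - b := by
    rw [← Real.rpow_add h1b, e, Real.rpow_one]
  unfold gR
  rw [e1, e2]
  ring

/-- `gR` is antitone in the first argument below the second. -/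
lemma L1 {α a a₂ b : ℝ} (hα : 1 < α) (ha : 0 ≤ a) (h12 : a ≤ a₂) (h2b : a₂ ≤ b)
    (hb0 : 0 < b) (hb1 : b < 1) : gR α a₂ b ≤ gR α a b := by
  rcases eq_or_lt_of_le (ha.trans h12) with h20 | h20
  · have ha0 : a = 0 := by linarith [h20.le, h12]
    rw [ha0, ← h20]
  · have hb1' : (0:ℝ) < 1 - b := by linarith
    have h2' : (0:ℝ) < 1 - a₂ := by linarith
    have k1 := grad_pos hα.le ha h20
    have k2 := grad_pos hα.le (by linarith : (0:ℝ) ≤ 1 - a) h2'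
    have m1 : a₂ ^ (α - 1) ≤ b ^ (α - 1) := Real.rpow_le_rpow h20.le h2b (by linarith)
    have m2 : (1 - b) ^ (α - 1) ≤ (1 - a₂) ^ (α - 1) :=
      Real.rpow_le_rpow hb1'.le (by linarith) (by linarith)
    have nb : (0:ℝ) ≤ b ^ (1 - α) := Real.rpow_nonneg hb0.le _
    have nb' : (0:ℝ) ≤ (1 - b) ^ (1 - α) := Real.rpow_nonneg hb1'.le _
    have u1 : b ^ (1 - α) * b ^ (α - 1) = 1 := by
      rw [← Real.rpow_add hb0]; norm_num
    have u2 : (1 - b) ^ (1 - α) * (1 - b) ^ (α - 1) = 1 := by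
      rw [← Real.rpow_add hb1']; norm_num
    have hd : (0:ℝ) ≤ a₂ - a := by linarith
    have hα0 : (0:ℝ) ≤ α := by linarith
    have A1 : b ^ (1 - α) * (a₂ ^ α - a ^ α) ≤ b ^ (1 - α) * (α * b ^ (α - 1) * (a₂ - a)) := by
      apply mul_le_mul_of_nonneg_left _ nb
      have s1 : a₂ ^ α - a ^ α ≤ α * a₂ ^ (α - 1) * (a₂ - a) := by linarith [k1]
      have s2 : α * a₂ ^ (α - 1) * (a₂ - a) ≤ α * b ^ (α - 1) * (a₂ - a) := by
        nlinarith [mul_nonneg (mul_nonneg hα0 hd) (sub_nonneg.mpr m1)]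
      linarith
    have A2 : b ^ (1 - α) * (α * b ^ (α - 1) * (a₂ - a)) = α * (a₂ - a) := by
      linear_combination (α * (a₂ - a)) * u1
    have B1 : (1 - b) ^ (1 - α) * ((1 - a₂) ^ α + α * (1 - b) ^ (α - 1) * (a₂ - a))
        ≤ (1 - b) ^ (1 - α) * ((1 - a) ^ α) := by
      apply mul_le_mul_of_nonneg_left _ nb'
      have s1 : (1 - a₂) ^ α + α * (1 - b) ^ (α - 1) * (a₂ - a)
          ≤ (1 - a₂) ^ α + α * (1 - a₂) ^ (α - 1) * (a₂ - a) := by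
        nlinarith [mul_nonneg (mul_nonneg hα0 hd) (sub_nonneg.mpr m2)]
      have s2 : (1 - a₂) ^ α + α * (1 - a₂) ^ (α - 1) * (a₂ - a) ≤ (1 - a) ^ α := by
        linarith [k2]
      linarith
    have B2 : (1 - b) ^ (1 - α) * ((1 - a₂) ^ α + α * (1 - b) ^ (α - 1) * (a₂ - a))
        = (1 - b) ^ (1 - α) * (1 - a₂) ^ α + α * (a₂ - a) := by
      linear_combination (α * (a₂ - a)) * u2
    unfold gR
    linarith [A1, A2, B1, B2]

/-- `gR` is monotone in the second argument above the first. -/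
lemma L2 {α a b b₂ : ℝ} (hα : 1 < α) (ha : 0 ≤ a) (hab : a ≤ b) (hb0 : 0 < b)
    (hbb : b ≤ b₂) (hb₂ : b₂ < 1) : gR α a b ≤ gR α a b₂ := by
  have hb₂0 : (0:ℝ) < b₂ := lt_of_lt_of_le hb0 hbb
  have h1b : (0:ℝ) < 1 - b := by linarith
  have h1b₂ : (0:ℝ) < 1 - b₂ := by linarith
  have k1 := grad_neg hα hb0 hb₂0
  have k2 := grad_neg hα h1b h1b₂
  have hba : a ^ α ≤ b ^ α := Real.rpow_le_rpow ha hab (by linarith)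
  have hbα : (0:ℝ) < b ^ α := Real.rpow_pos_of_pos hb0 α
  have m1 : a ^ α * b ^ (-α) ≤ 1 := by
    rw [Real.rpow_neg hb0.le, ← div_eq_mul_inv]
    exact (div_le_one hbα).mpr hba
  have m2 : 1 ≤ (1 - a) ^ α * (1 - b) ^ (-α) := by
    have hm : (1 - b) ^ α ≤ (1 - a) ^ α :=
      Real.rpow_le_rpow h1b.le (by linarith) (by linarith)
    rw [Real.rpow_neg h1b.le, ← div_eq_mul_inv]
    exact (one_le_div (Real.rpow_pos_of_pos h1b α)).mpr hm
  have naα : (0:ℝ) ≤ a ^ α := Real.rpow_nonneg ha α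
  have n1a : (0:ℝ) ≤ (1 - a) ^ α := Real.rpow_nonneg (by linarith) α
  have hd : (0:ℝ) ≤ b₂ - b := by linarith
  have hα1 : (0:ℝ) ≤ α - 1 := by linarith
  have A : a ^ α * b ^ (1 - α) ≤ a ^ α * b₂ ^ (1 - α) + (α - 1) * (b₂ - b) := by
    have h := mul_le_mul_of_nonneg_left k1 naα
    have hint := mul_le_mul_of_nonneg_left m1 (mul_nonneg hα1 hd)
    nlinarith [h, hint]
  have B : (1 - a) ^ α * (1 - b) ^ (1 - α) + (α - 1) * (b₂ - b)
      ≤ (1 - a) ^ α * (1 - b₂) ^ (1 - α) := by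
    have h := mul_le_mul_of_nonneg_left k2 n1a
    have hint := mul_le_mul_of_nonneg_left m2 (mul_nonneg hα1 hd)
    nlinarith [h, hint]
  unfold gR
  linarith [A, B]
/-- ENNReal version of the Rényi sum between Bernoulli parameters. -/
noncomputable def GE (α a b : ℝ) : ℝ≥0∞ :=
  ENNReal.ofReal a ^ α * ENNReal.ofReal b ^ (1 - α) +
    ENNReal.ofReal (1 - a) ^ α * ENNReal.ofReal (1 - b) ^ (1 - α)

lemma renyiDiv_Ber (α a b : ℝ) :
    renyiDiv α (Ber a) (Ber b) = ((α - 1)⁻¹ : ℝ) * ENNReal.log (GE α a b) := by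
  unfold renyiDiv GE Ber
  rw [Fintype.sum_bool]
  norm_num

lemma GE_eq {α a b : ℝ} (hα : 1 < α) (ha0 : 0 ≤ a) (ha1 : a ≤ 1) (hb0 : 0 < b) (hb1 : b < 1) :
    GE α a b = ENNReal.ofReal (gR α a b) := by
  have hα0 : (0:ℝ) ≤ α := by linarith
  have h1a : (0:ℝ) ≤ 1 - a := by linarith
  have h1b : (0:ℝ) < 1 - b := by linarith
  unfold GE gR
  rw [ENNReal.ofReal_add (mul_nonneg (Real.rpow_nonneg ha0 _) (Real.rpow_nonneg hb0.le _))
      (mul_nonneg (Real.rpow_nonneg h1a _) (Real.rpow_nonneg h1b.le _)),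
    ENNReal.ofReal_mul (Real.rpow_nonneg ha0 _),
    ENNReal.ofReal_mul (Real.rpow_nonneg h1a _),
    ← ENNReal.ofReal_rpow_of_nonneg ha0 hα0,
    ← ENNReal.ofReal_rpow_of_pos hb0,
    ← ENNReal.ofReal_rpow_of_nonneg h1a hα0,
    ← ENNReal.ofReal_rpow_of_pos h1b]

lemma GE_flip (α a b : ℝ) : GE α (1 - a) (1 - b) = GE α a b := by
  unfold GE
  rw [sub_sub_cancel, sub_sub_cancel]
  exact add_comm _ _

lemma GE_top {α a : ℝ} (hα : 1 < α) (ha1 : a < 1) : GE α a 1 = ⊤ := by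
  unfold GE
  rw [show (1:ℝ) - 1 = 0 by ring, ENNReal.ofReal_zero,
    ENNReal.zero_rpow_of_neg (by linarith : 1 - α < 0),
    ENNReal.mul_top (ENNReal.rpow_pos (ENNReal.ofReal_pos.mpr (by linarith)) ENNReal.ofReal_ne_top).ne',
    add_top _]

lemma GE_top_left {α a : ℝ} (hα : 1 < α) (ha : 0 < a) : GE α a 0 = ⊤ := by
  unfold GE
  rw [ENNReal.ofReal_zero, ENNReal.zero_rpow_of_neg (by linarith : 1 - α < 0),
    ENNReal.mul_top (ENNReal.rpow_pos (ENNReal.ofReal_pos.mpr ha) ENNReal.ofReal_ne_top).ne',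
    top_add _]

lemma GE_self {α r : ℝ} (hα : 1 < α) (h0 : 0 ≤ r) (h1 : r ≤ 1) : GE α r r = 1 := by
  have hαpos : (0:ℝ) < α := by linarith
  rcases eq_or_lt_of_le h0 with h | h
  · simp [GE, ← h, ENNReal.zero_rpow_of_pos hαpos]
  rcases eq_or_lt_of_le h1 with h' | h'
  · simp [GE, h', ENNReal.zero_rpow_of_pos hαpos]
  · rw [GE_eq hα h0 h1 h h', gR_self h h', ENNReal.ofReal_one]

lemma renyiDiv_Ber_self {α r : ℝ} (hα : 1 < α) (h0 : 0 ≤ r) (h1 : r ≤ 1) :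
    renyiDiv α (Ber r) (Ber r) = 0 := by
  rw [renyiDiv_Ber, GE_self hα h0 h1, ENNReal.log_one, mul_zero]

lemma GE_ge_one_le {α a b : ℝ} (hα : 1 < α) (ha : 0 ≤ a) (hab : a ≤ b) (hb0 : 0 < b)
    (hb1 : b < 1) : 1 ≤ GE α a b := by
  rw [GE_eq hα ha (hab.trans hb1.le) hb0 hb1, ← ENNReal.ofReal_one]
  apply ENNReal.ofReal_le_ofReal
  have h := L1 hα ha hab le_rfl hb0 hb1
  rw [gR_self hb0 hb1] at h
  exact h

lemma GE_ge_one {α a b : ℝ} (hα : 1 < α) (ha0 : 0 ≤ a) (ha1 : a ≤ 1) (hb0 : 0 ≤ b)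
    (hb1 : b ≤ 1) : 1 ≤ GE α a b := by
  rcases eq_or_lt_of_le hb0 with h | h
  · rcases eq_or_lt_of_le ha0 with h' | h'
    · rw [← h, ← h', GE_self hα le_rfl zero_le_one]
    · rw [← h, GE_top_left hα h']
      exact le_top
  rcases eq_or_lt_of_le hb1 with h' | h'
  · rcases eq_or_lt_of_le ha1 with h'' | h''
    · rw [h', h'', GE_self hα zero_le_one le_rfl]
    · rw [h', GE_top hα h'']
      exact le_top
  · rcases le_total a b with hab | hba
    · exact GE_ge_one_le hα ha0 hab h h'
    · rw [← GE_flip]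
      exact GE_ge_one_le hα (by linarith) (by linarith) (by linarith) (by linarith)

lemma GE_lower_lt {α p' pS qS q' : ℝ} (hα : 1 < α) (h0p' : 0 ≤ p') (hp'S : p' ≤ pS)
    (hpS1 : pS < 1) (hSS : pS ≤ qS) (hqS0 : 0 < qS) (hqSq : qS ≤ q') (hq'1 : q' ≤ 1) :
    GE α pS qS ≤ GE α p' q' := by
  rcases eq_or_lt_of_le hq'1 with h | h
  · rw [h, GE_top hα (lt_of_le_of_lt hp'S hpS1)]
    exact le_top
  · have hq'0 : 0 < q' := lt_of_lt_of_le hqS0 hqSq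
    have hqS1 : qS < 1 := lt_of_le_of_lt hqSq h
    have h0pS : 0 ≤ pS := le_trans h0p' hp'S
    rw [GE_eq hα h0pS hpS1.le hqS0 hqS1, GE_eq hα h0p' (le_trans hp'S hpS1.le) hq'0 h]
    apply ENNReal.ofReal_le_ofReal
    calc gR α pS qS ≤ gR α pS q' := L2 hα h0pS hSS hqS0 hqSq h
      _ ≤ gR α p' q' := L1 hα h0p' hp'S (le_trans hSS hqSq) hq'0 h

lemma GE_lower_gt {α p' pS qS q' : ℝ} (hα : 1 < α) (hp'1 : p' ≤ 1) (hSp' : pS ≤ p')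
    (hpS0 : 0 < pS) (hqp : qS ≤ pS) (hqS1 : qS < 1) (hq'S : q' ≤ qS) (h0q' : 0 ≤ q') :
    GE α pS qS ≤ GE α p' q' := by
  rw [← GE_flip α pS qS, ← GE_flip α p' q']
  exact GE_lower_lt hα (by linarith) (by linarith) (by linarith) (by linarith)
    (by linarith) (by linarith) (by linarith)
lemma isPMF_Ber {t : ℝ} (h0 : 0 ≤ t) (h1 : t ≤ 1) : IsPMF (Ber t) := by
  unfold IsPMF Ber
  rw [Fintype.sum_bool]
  norm_num
  rw [← ENNReal.ofReal_add h0 (by linarith), show t + (1 - t) = 1 by ring, ENNReal.ofReal_one]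

lemma isPMF_Bool {P : Bool → ℝ≥0∞} (h : IsPMF P) :
    ∃ t, 0 ≤ t ∧ t ≤ 1 ∧ P = Ber t := by
  have hsum : P true + P false = 1 := by
    have := h
    unfold IsPMF at this
    rwa [Fintype.sum_bool] at this
  have htop : P true ≠ ⊤ := by
    intro h'
    rw [h', top_add] at hsum
    exact (ENNReal.top_ne_one) hsum
  have hle : P true ≤ 1 := by
    rw [← hsum]
    exact le_self_add
  refine ⟨(P true).toReal, ENNReal.toReal_nonneg, ?_, ?_⟩
  · have := ENNReal.toReal_mono (by simp : (1:ℝ≥0∞) ≠ ⊤) hle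
    simpa using this
  · have hPt : ENNReal.ofReal (P true).toReal = P true := ENNReal.ofReal_toReal htop
    funext x
    cases x
    · have hf : P false = 1 - P true := by
        rw [← hsum, ENNReal.add_sub_cancel_left htop]
      show P false = ENNReal.ofReal (1 - (P true).toReal)
      rw [hf, ENNReal.ofReal_sub 1 ENNReal.toReal_nonneg, ENNReal.ofReal_one, hPt]
    · show P true = ENNReal.ofReal (P true).toReal
      rw [hPt]

lemma ber_mix {δ p p' p'' : ℝ} (hδ0 : 0 ≤ δ) (hδ1 : δ ≤ 1) (h'0 : 0 ≤ p') (h'1 : p' ≤ 1)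
    (h''0 : 0 ≤ p'') (h''1 : p'' ≤ 1) (hpe : p = (1 - δ) * p' + δ * p'') :
    ∀ x, Ber p x = ENNReal.ofReal (1 - δ) * Ber p' x + ENNReal.ofReal δ * Ber p'' x := by
  have h1δ : (0:ℝ) ≤ 1 - δ := by linarith
  intro x
  cases x
  · show ENNReal.ofReal (1 - p) = ENNReal.ofReal (1 - δ) * ENNReal.ofReal (1 - p')
        + ENNReal.ofReal δ * ENNReal.ofReal (1 - p'')
    rw [← ENNReal.ofReal_mul h1δ, ← ENNReal.ofReal_mul hδ0,
      ← ENNReal.ofReal_add (mul_nonneg h1δ (by linarith)) (mul_nonneg hδ0 (by linarith))]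
    congr 1
    linear_combination -hpe
  · show ENNReal.ofReal p = ENNReal.ofReal (1 - δ) * ENNReal.ofReal p'
        + ENNReal.ofReal δ * ENNReal.ofReal p''
    rw [← ENNReal.ofReal_mul h1δ, ← ENNReal.ofReal_mul hδ0,
      ← ENNReal.ofReal_add (mul_nonneg h1δ h'0) (mul_nonneg hδ0 h''0)]
    exact congrArg ENNReal.ofReal hpe

lemma mix_real {δ p p' p'' : ℝ} (hp : 0 ≤ p) (hδ0 : 0 ≤ δ) (hδ1 : δ ≤ 1) (h'0 : 0 ≤ p')
    (h''0 : 0 ≤ p'')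
    (h : Ber p true = ENNReal.ofReal (1 - δ) * Ber p' true + ENNReal.ofReal δ * Ber p'' true) :
    p = (1 - δ) * p' + δ * p'' := by
  have h1δ : (0:ℝ) ≤ 1 - δ := by linarith
  have h' : ENNReal.ofReal p = ENNReal.ofReal (1 - δ) * ENNReal.ofReal p'
      + ENNReal.ofReal δ * ENNReal.ofReal p'' := h
  rw [← ENNReal.ofReal_mul h1δ, ← ENNReal.ofReal_mul hδ0,
    ← ENNReal.ofReal_add (mul_nonneg h1δ h'0) (mul_nonneg hδ0 h''0)] at h'
  exact (ENNReal.ofReal_eq_ofReal_iff hp (add_nonneg (mul_nonneg h1δ h'0) (mul_nonneg hδ0 h''0))).mp h'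

lemma mem_approx {α δ p q p' p'' q' q'' : ℝ} (hδ0 : 0 ≤ δ) (hδ1 : δ ≤ 1)
    (hp'0 : 0 ≤ p') (hp'1 : p' ≤ 1) (hp''0 : 0 ≤ p'') (hp''1 : p'' ≤ 1)
    (hq'0 : 0 ≤ q') (hq'1 : q' ≤ 1) (hq''0 : 0 ≤ q'') (hq''1 : q'' ≤ 1)
    (hpe : p = (1 - δ) * p' + δ * p'') (hqe : q = (1 - δ) * q' + δ * q'') :
    renyiDiv α (Ber p') (Ber q') ∈ { d : EReal | ∃ P' P'' Q' Q'' : Bool → ℝ≥0∞,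
      IsPMF P' ∧ IsPMF P'' ∧ IsPMF Q' ∧ IsPMF Q'' ∧
      (∀ x, Ber p x = ENNReal.ofReal (1 - δ) * P' x + ENNReal.ofReal δ * P'' x) ∧
      (∀ x, Ber q x = ENNReal.ofReal (1 - δ) * Q' x + ENNReal.ofReal δ * Q'' x) ∧
      d = renyiDiv α P' Q' } :=
  ⟨Ber p', Ber p'', Ber q', Ber q'', isPMF_Ber hp'0 hp'1, isPMF_Ber hp''0 hp''1,
    isPMF_Ber hq'0 hq'1, isPMF_Ber hq''0 hq''1,
    ber_mix hδ0 hδ1 hp'0 hp'1 hp''0 hp''1 hpe,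
    ber_mix hδ0 hδ1 hq'0 hq'1 hq''0 hq''1 hqe, rfl⟩

/-- Explicit formula for the δ-approximate Rényi divergence between Bernoulli
distributions. -/
theorem stmt3 (α δ p q : ℝ) (hα : 1 < α) (hδ : δ ∈ Set.Ico (0:ℝ) 1)
    (hp : p ∈ Set.Icc (0:ℝ) 1) (hq : q ∈ Set.Icc (0:ℝ) 1) :
    (p < q - δ → approxRenyiDiv α δ (Ber p) (Ber q)
        = renyiDiv α (Ber (p / (1 - δ))) (Ber ((q - δ) / (1 - δ)))) ∧
    (p > q + δ → approxRenyiDiv α δ (Ber p) (Ber q)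
        = renyiDiv α (Ber ((p - δ) / (1 - δ))) (Ber (q / (1 - δ)))) ∧
    (|p - q| ≤ δ → approxRenyiDiv α δ (Ber p) (Ber q) = 0) := by
  obtain ⟨hδ0, hδ1⟩ := hδ
  obtain ⟨hp0, hp1⟩ := hp
  obtain ⟨hq0, hq1⟩ := hq
  have h1δ : (0:ℝ) < 1 - δ := by linarith
  have hc : (0:EReal) ≤ ((α - 1)⁻¹ : ℝ) := by
    have h : (0:ℝ) ≤ (α - 1)⁻¹ := inv_nonneg.mpr (by linarith)
    exact_mod_cast h
  refine ⟨?_, ?_, ?_⟩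
  · -- case p < q - δ
    intro hlt
    have hpS0 : 0 ≤ p / (1 - δ) := div_nonneg hp0 h1δ.le
    have hpS1 : p / (1 - δ) < 1 := (div_lt_one h1δ).mpr (by linarith)
    have hqS0 : 0 < (q - δ) / (1 - δ) := div_pos (by linarith) h1δ
    have hqS1 : (q - δ) / (1 - δ) ≤ 1 := (div_le_one h1δ).mpr (by linarith)
    have hSS : p / (1 - δ) ≤ (q - δ) / (1 - δ) := by
      rw [div_le_div_iff₀ h1δ h1δ]
      nlinarith
    apply le_antisymm
    · have hpe : p = (1 - δ) * (p / (1 - δ)) + δ * 0 := by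
        field_simp
        ring
      have hqe : q = (1 - δ) * ((q - δ) / (1 - δ)) + δ * 1 := by
        field_simp
        ring
      have hmem := mem_approx (α := α) hδ0 hδ1.le hpS0 hpS1.le (le_refl (0:ℝ)) zero_le_one
        hqS0.le hqS1 zero_le_one le_rfl hpe hqe
      exact sInf_le hmem
    · apply le_sInf
      rintro d ⟨P', P'', Q', Q'', h1, h2, h3, h4, hP, hQ, rfl⟩
      obtain ⟨p', hp'0, hp'1, rfl⟩ := isPMF_Bool h1
      obtain ⟨p'', hp''0, hp''1, rfl⟩ := isPMF_Bool h2
      obtain ⟨q', hq'0, hq'1, rfl⟩ := isPMF_Bool h3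
      obtain ⟨q'', hq''0, hq''1, rfl⟩ := isPMF_Bool h4
      have hpe := mix_real hp0 hδ0 hδ1.le hp'0 hp''0 (hP true)
      have hqe := mix_real hq0 hδ0 hδ1.le hq'0 hq''0 (hQ true)
      have hb1 : p' ≤ p / (1 - δ) := by
        rw [le_div_iff₀ h1δ]
        nlinarith [mul_nonneg hδ0 hp''0]
      have hb2 : (q - δ) / (1 - δ) ≤ q' := by
        rw [div_le_iff₀ h1δ]
        nlinarith [mul_le_of_le_one_right hδ0 hq''1]
      rw [renyiDiv_Ber, renyiDiv_Ber]
      exact mul_le_mul_of_nonneg_left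
        (ENNReal.log_monotone (GE_lower_lt hα hp'0 hb1 hpS1 hSS hqS0 hb2 hq'1)) hc
  · -- case p > q + δ
    intro hgt
    have hpS0 : 0 < (p - δ) / (1 - δ) := div_pos (by linarith) h1δ
    have hpS1 : (p - δ) / (1 - δ) ≤ 1 := (div_le_one h1δ).mpr (by linarith)
    have hqS0 : 0 ≤ q / (1 - δ) := div_nonneg hq0 h1δ.le
    have hqS1 : q / (1 - δ) < 1 := (div_lt_one h1δ).mpr (by linarith)
    have hSS : q / (1 - δ) ≤ (p - δ) / (1 - δ) := by
      rw [div_le_div_iff₀ h1δ h1δ]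
      nlinarith
    apply le_antisymm
    · have hpe : p = (1 - δ) * ((p - δ) / (1 - δ)) + δ * 1 := by
        field_simp
        ring
      have hqe : q = (1 - δ) * (q / (1 - δ)) + δ * 0 := by
        field_simp
        ring
      have hmem := mem_approx (α := α) hδ0 hδ1.le hpS0.le hpS1 zero_le_one (le_refl (1:ℝ))
        hqS0 hqS1.le (le_refl (0:ℝ)) zero_le_one hpe hqe
      exact sInf_le hmem
    · apply le_sInf
      rintro d ⟨P', P'', Q', Q'', h1, h2, h3, h4, hP, hQ, rfl⟩
      obtain ⟨p', hp'0, hp'1, rfl⟩ := isPMF_Bool h1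
      obtain ⟨p'', hp''0, hp''1, rfl⟩ := isPMF_Bool h2
      obtain ⟨q', hq'0, hq'1, rfl⟩ := isPMF_Bool h3
      obtain ⟨q'', hq''0, hq''1, rfl⟩ := isPMF_Bool h4
      have hpe := mix_real hp0 hδ0 hδ1.le hp'0 hp''0 (hP true)
      have hqe := mix_real hq0 hδ0 hδ1.le hq'0 hq''0 (hQ true)
      have hb1 : (p - δ) / (1 - δ) ≤ p' := by
        rw [div_le_iff₀ h1δ]
        nlinarith [mul_le_of_le_one_right hδ0 hp''1]
      have hb2 : q' ≤ q / (1 - δ) := by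
        rw [le_div_iff₀ h1δ]
        nlinarith [mul_nonneg hδ0 hq''0]
      rw [renyiDiv_Ber, renyiDiv_Ber]
      exact mul_le_mul_of_nonneg_left
        (ENNReal.log_monotone (GE_lower_gt hα hp'1 hb1 hpS0 hSS hqS1 hb2 hq'0)) hc
  · -- case |p - q| ≤ δ
    intro habs
    obtain ⟨ha1, ha2⟩ := abs_le.mp habs
    apply le_antisymm
    · rcases eq_or_lt_of_le hδ0 with hd0 | hd0
      · -- δ = 0
        have hpq : p = q := by linarith
        have hpe : p = (1 - δ) * p + δ * 0 := by rw [← hd0]; ring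
        have hqe : q = (1 - δ) * p + δ * 0 := by rw [← hpq, ← hd0]; ring
        have hmem := mem_approx (α := α) hδ0 hδ1.le hp0 hp1 (le_refl (0:ℝ)) zero_le_one
          hp0 hp1 (le_refl (0:ℝ)) zero_le_one hpe hqe
        exact (sInf_le hmem).trans (le_of_eq (renyiDiv_Ber_self hα hp0 hp1))
      · -- 0 < δ
        have hM1 : max p q ≤ 1 := max_le hp1 hq1
        have hMp : max p q - δ ≤ p := by
          have h : max p q ≤ p + δ := max_le (by linarith) (by linarith)
          linarith
        have hMq : max p q - δ ≤ q := by
          have h : max p q ≤ q + δ := max_le (by linarith) (by linarith)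
          linarith
        have hpM : p ≤ max p q := le_max_left _ _
        have hqM : q ≤ max p q := le_max_right _ _
        have hr0 : 0 ≤ max 0 ((max p q - δ) / (1 - δ)) := le_max_left _ _
        have hr1 : max 0 ((max p q - δ) / (1 - δ)) ≤ 1 := by
          apply max_le (by linarith)
          rw [div_le_one h1δ]
          linarith
        have hkey1p : (1 - δ) * max 0 ((max p q - δ) / (1 - δ)) ≤ p := by
          rcases le_total ((max p q - δ) / (1 - δ)) 0 with h | h
          · rw [max_eq_left h, mul_zero]; exact hp0
          · rw [max_eq_right h, mul_comm, div_mul_cancel₀ _ h1δ.ne']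
            exact hMp
        have hkey1q : (1 - δ) * max 0 ((max p q - δ) / (1 - δ)) ≤ q := by
          rcases le_total ((max p q - δ) / (1 - δ)) 0 with h | h
          · rw [max_eq_left h, mul_zero]; exact hq0
          · rw [max_eq_right h, mul_comm, div_mul_cancel₀ _ h1δ.ne']
            exact hMq
        have hMδ : ∀ x : ℝ, x ≤ max p q → (max p q - δ) / (1 - δ) ≤ 0 → x - δ ≤ 0 := by
          intro x hx h
          have hM0 : max p q - δ ≤ 0 := by
            by_contra hcon
            push_neg at hcon
            have := div_pos hcon h1δ
            linarith
          linarith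
        have hkey2p : p - δ ≤ (1 - δ) * max 0 ((max p q - δ) / (1 - δ)) := by
          rcases le_total ((max p q - δ) / (1 - δ)) 0 with h | h
          · rw [max_eq_left h, mul_zero]
            exact hMδ p hpM h
          · rw [max_eq_right h, mul_comm, div_mul_cancel₀ _ h1δ.ne']
            linarith
        have hkey2q : q - δ ≤ (1 - δ) * max 0 ((max p q - δ) / (1 - δ)) := by
          rcases le_total ((max p q - δ) / (1 - δ)) 0 with h | h
          · rw [max_eq_left h, mul_zero]
            exact hMδ q hqM h
          · rw [max_eq_right h, mul_comm, div_mul_cancel₀ _ h1δ.ne']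
            linarith
        have hp''0 : 0 ≤ (p - (1 - δ) * max 0 ((max p q - δ) / (1 - δ))) / δ :=
          div_nonneg (by linarith) hδ0
        have hp''1 : (p - (1 - δ) * max 0 ((max p q - δ) / (1 - δ))) / δ ≤ 1 := by
          rw [div_le_one hd0]
          linarith
        have hq''0 : 0 ≤ (q - (1 - δ) * max 0 ((max p q - δ) / (1 - δ))) / δ :=
          div_nonneg (by linarith) hδ0
        have hq''1 : (q - (1 - δ) * max 0 ((max p q - δ) / (1 - δ))) / δ ≤ 1 := by
          rw [div_le_one hd0]
          linarith
        have hpe : p = (1 - δ) * max 0 ((max p q - δ) / (1 - δ))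
            + δ * ((p - (1 - δ) * max 0 ((max p q - δ) / (1 - δ))) / δ) := by
          field_simp
          ring
        have hqe : q = (1 - δ) * max 0 ((max p q - δ) / (1 - δ))
            + δ * ((q - (1 - δ) * max 0 ((max p q - δ) / (1 - δ))) / δ) := by
          field_simp
          ring
        have hmem := mem_approx (α := α) hδ0 hδ1.le hr0 hr1 hp''0 hp''1 hr0 hr1
          hq''0 hq''1 hpe hqe
        exact (sInf_le hmem).trans (le_of_eq (renyiDiv_Ber_self hα hr0 hr1))
    · apply le_sInf
      rintro d ⟨P', P'', Q', Q'', h1, h2, h3, h4, hP, hQ, rfl⟩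
      obtain ⟨p', hp'0, hp'1, rfl⟩ := isPMF_Bool h1
      obtain ⟨q', hq'0, hq'1, rfl⟩ := isPMF_Bool h3
      rw [renyiDiv_Ber]
      have hlog : (0:EReal) ≤ ENNReal.log (GE α p' q') :=
        ENNReal.zero_le_log_iff.mpr (GE_ge_one hα hp'0 hp'1 hq'0 hq'1)
      calc (0:EReal) = ((α - 1)⁻¹ : ℝ) * 0 := (mul_zero _).symm
        _ ≤ _ := mul_le_mul_of_nonneg_left hlog hc
end

section
/- Fix α > 1, δ ∈ [0,1), and p ∈ [0,1]. The δ-approximate Rényi divergence D_α^δ(Ber(p)‖Ber(q)), as a function of q, is non-increasing on [0, p] and non-decreasing on [p, 1]. -/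
open scoped ENNReal

lemma ofReal_rpow_mul {α : ℝ} (hα : 1 < α) {a b : ℝ} (ha : 0 ≤ a) (hb : 0 ≤ b)
    (h : b = 0 → a = 0) :
    ENNReal.ofReal a ^ α * ENNReal.ofReal b ^ (1 - α) =
      ENNReal.ofReal (a ^ α * b ^ (1 - α)) := by
  rcases eq_or_lt_of_le hb with hb0 | hb0
  · have ha0 : a = 0 := h hb0.symm
    subst ha0
    rw [← hb0]
    simp only [ENNReal.ofReal_zero]
    rw [ENNReal.zero_rpow_of_pos (by linarith), Real.zero_rpow (by positivity), zero_mul,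
      zero_mul, ENNReal.ofReal_zero]
  · rw [ENNReal.ofReal_rpow_of_nonneg ha (by linarith : (0:ℝ) ≤ α),
      ENNReal.ofReal_rpow_of_pos hb0,
      ← ENNReal.ofReal_mul (Real.rpow_nonneg ha α)]

/-- Core real inequality: `u ↦ p'^α u^(1-α) + (1-p')^α (1-u)^(1-α)` is antitone on `(0, p']`. -/
lemma real_renyi_mono {α : ℝ} (hα : 1 < α) {p' s t : ℝ} (hs : 0 < s) (hst : s ≤ t)
    (htp : t ≤ p') (hp1 : p' ≤ 1) :
    p' ^ α * t ^ (1-α) + (1-p') ^ α * (1-t) ^ (1-α)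
      ≤ p' ^ α * s ^ (1-α) + (1-p') ^ α * (1-s) ^ (1-α) := by
  rcases eq_or_lt_of_le hst with rfl | hst'
  · exact le_rfl
  rcases eq_or_lt_of_le (htp.trans hp1) with ht1 | ht1
  · -- t = 1, hence p' = 1
    have hp'1 : p' = 1 := le_antisymm hp1 (by linarith)
    subst ht1
    subst hp'1
    have h0 : (0:ℝ) ^ α = 0 := Real.zero_rpow (by positivity)
    rw [show (1:ℝ) - 1 = 0 by ring, h0]
    simp only [zero_mul, add_zero, Real.one_rpow, one_mul]
    have h2 : (1:ℝ) ^ (1-α) ≤ s ^ (1-α) :=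
      Real.rpow_le_rpow_of_nonpos hs (by linarith : s ≤ 1) (by linarith : 1-α ≤ 0)
    rw [Real.one_rpow] at h2
    linarith
  · -- t < 1 : use derivative argument on [s,t]
    set A := p' ^ α with hA
    set B := (1-p') ^ α with hB
    set f : ℝ → ℝ := fun x => A * x ^ (1-α) + B * (1-x) ^ (1-α) with hf
    have key : AntitoneOn f (Set.Icc s t) := by
      have hd : ∀ x ∈ Set.Icc s t,
          HasDerivAt f (A * ((1-α) * x ^ (-α)) + B * (-1 * (1-α) * (1-x) ^ (-α))) x := by
        intro x hx
        have hx0 : 0 < x := lt_of_lt_of_le hs hx.1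
        have hx1 : x < 1 := lt_of_le_of_lt hx.2 ht1
        have h1 : HasDerivAt (fun y : ℝ => y ^ (1-α)) ((1-α) * x ^ (1-α-1)) x :=
          Real.hasDerivAt_rpow_const (Or.inl hx0.ne')
        have h2 : HasDerivAt (fun y : ℝ => 1 - y) (-1) x := by
          simpa using (hasDerivAt_id x).const_sub 1
        have h3 : HasDerivAt (fun y : ℝ => (1-y) ^ (1-α)) (-1 * (1-α) * (1-x) ^ (1-α-1)) x :=
          h2.rpow_const (Or.inl (by linarith : (1:ℝ) - x ≠ 0))
        have := (h1.const_mul A).add (h3.const_mul B)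
        rw [show (1:ℝ) - α - 1 = -α by ring] at this
        exact this
      apply antitoneOn_of_deriv_nonpos (convex_Icc s t)
      · exact fun x hx => (hd x hx).continuousAt.continuousWithinAt
      · intro x hx
        rw [interior_Icc] at hx
        exact ((hd x (Set.mem_Icc_of_Ioo hx)).differentiableAt).differentiableWithinAt
      · intro x hx
        rw [interior_Icc] at hx
        rw [(hd x (Set.mem_Icc_of_Ioo hx)).deriv]
        have hx0 : 0 < x := lt_of_lt_of_le hs (le_of_lt hx.1)
        have hx1 : x < 1 := lt_of_lt_of_le hx.2 (le_of_lt ht1)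
        have hxp : x ≤ p' := le_trans (le_of_lt hx.2) htp
        have key2 : B * (1-x) ^ (-α) ≤ A * x ^ (-α) := by
          rw [Real.rpow_neg (le_of_lt hx0), Real.rpow_neg (by linarith : (0:ℝ) ≤ 1 - x),
            ← div_eq_mul_inv, ← div_eq_mul_inv,
            div_le_div_iff₀ (Real.rpow_pos_of_pos (by linarith) α) (Real.rpow_pos_of_pos hx0 α),
            hA, hB, ← Real.mul_rpow (by linarith) (le_of_lt hx0),
            ← Real.mul_rpow (by linarith) (by linarith)]
          apply Real.rpow_le_rpow (by nlinarith) (by nlinarith) (by linarith)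
        nlinarith [key2, Real.rpow_nonneg (le_of_lt hx0) (-α),
          Real.rpow_nonneg (by linarith : (0:ℝ) ≤ 1-x) (-α)]
    exact key (Set.left_mem_Icc.mpr hst) (Set.right_mem_Icc.mpr hst) hst

/-- monotonicity of the plain Rényi divergence against `Ber` in the second argument,
on `[0, p']`. -/
lemma renyiDiv_ber_mono {α : ℝ} (hα : 1 < α) {P' : Bool → ℝ≥0∞} (hP : IsPMF P')
    {s t : ℝ} (hs : 0 ≤ s) (hst : s ≤ t) (ht : t ≤ (P' true).toReal) :
    renyiDiv α P' (Ber t) ≤ renyiDiv α P' (Ber s) := by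
  have hsum : P' true + P' false = 1 := by
    rw [IsPMF, Fintype.sum_bool] at hP; exact hP
  have htle : P' true ≤ 1 := le_of_le_of_eq le_self_add hsum
  have htne : P' true ≠ ⊤ := ne_top_of_le_ne_top ENNReal.one_ne_top htle
  set p' : ℝ := (P' true).toReal with hp'def
  have hp'0 : 0 ≤ p' := ENNReal.toReal_nonneg
  have hp'1 : p' ≤ 1 := by
    rw [hp'def]
    exact ENNReal.toReal_le_of_le_ofReal zero_le_one (by simpa using htle)
  have hPt : P' true = ENNReal.ofReal p' := (ENNReal.ofReal_toReal htne).symm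
  have hPf : P' false = ENNReal.ofReal (1 - p') := by
    have h1 : P' false = 1 - P' true :=
      ENNReal.eq_sub_of_add_eq htne (by rw [add_comm]; exact hsum)
    rw [h1, hPt, ← ENNReal.ofReal_one, ← ENNReal.ofReal_sub _ hp'0]
  rcases eq_or_lt_of_le hst with rfl | hst'
  · exact le_rfl
  have ht0 : 0 < t := lt_of_le_of_lt hs hst'
  have hp'pos : 0 < p' := lt_of_lt_of_le ht0 ht
  -- unfold
  have hexp : (1:ℝ) - α < 0 := by linarith
  simp only [renyiDiv, Fintype.sum_bool, Ber, Bool.false_eq_true, if_true, if_false, hPt, hPf]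
  rcases eq_or_lt_of_le hs with rfl | hs0
  · -- s = 0 : RHS is ⊤
    have hterm : ENNReal.ofReal p' ^ α * ENNReal.ofReal 0 ^ (1-α) = ⊤ := by
      rw [ENNReal.ofReal_zero, ENNReal.zero_rpow_of_neg hexp, ENNReal.mul_top]
      simp only [ne_eq, ENNReal.rpow_eq_zero_iff, not_or, not_and, not_lt]
      constructor
      · intro h0
        exact absurd h0 (by simp [ENNReal.ofReal_pos.mpr hp'pos, ne_of_gt])
      · intro h0
        exact absurd h0 (by simp)
    rw [hterm, top_add, ENNReal.log_top,
      EReal.mul_top_of_pos (EReal.coe_pos.mpr (inv_pos.mpr (by linarith : (0:ℝ) < α - 1)))]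
    exact le_top
  · -- 0 < s
    apply mul_le_mul_of_nonneg_left _
      (EReal.coe_nonneg.mpr (inv_nonneg.mpr (by linarith : (0:ℝ) ≤ α - 1)))
    apply ENNReal.log_monotone
    have ht1 : t ≤ 1 := le_trans ht hp'1
    have hs1 : s ≤ 1 := le_trans hst ht1
    have e1 := ofReal_rpow_mul hα hp'0 (le_of_lt ht0) (fun h => absurd h (ne_of_gt ht0))
    have e2 := ofReal_rpow_mul hα (by linarith : (0:ℝ) ≤ 1 - p')
      (by linarith : (0:ℝ) ≤ 1 - t) (fun h => by linarith)
    have e3 := ofReal_rpow_mul hα hp'0 (le_of_lt hs0) (fun h => absurd h (ne_of_gt hs0))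
    have e4 := ofReal_rpow_mul hα (by linarith : (0:ℝ) ≤ 1 - p')
      (by linarith : (0:ℝ) ≤ 1 - s) (fun h => by linarith)
    rw [e1, e2, e3, e4,
      ← ENNReal.ofReal_add (mul_nonneg (Real.rpow_nonneg hp'0 _) (Real.rpow_nonneg (by linarith) _))
        (mul_nonneg (Real.rpow_nonneg (by linarith) _) (Real.rpow_nonneg (by linarith) _)),
      ← ENNReal.ofReal_add (mul_nonneg (Real.rpow_nonneg hp'0 _) (Real.rpow_nonneg (by linarith) _))
        (mul_nonneg (Real.rpow_nonneg (by linarith) _) (Real.rpow_nonneg (by linarith) _))]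
    exact ENNReal.ofReal_le_ofReal (real_renyi_mono hα hs0 hst ht hp'1)

lemma Ber_not (p : ℝ) (b : Bool) : Ber p (!b) = Ber (1-p) b := by
  cases b <;> simp [Ber] <;> ring_nf

lemma isPMF_comp_not {P : Bool → ℝ≥0∞} (h : IsPMF P) : IsPMF (fun b => P (!b)) := by
  rw [IsPMF, Fintype.sum_bool] at h ⊢
  simpa [add_comm] using h

lemma renyiDiv_comp_not (α : ℝ) (P Q : Bool → ℝ≥0∞) :
    renyiDiv α (fun b => P (!b)) (fun b => Q (!b)) = renyiDiv α P Q := by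
  simp only [renyiDiv, Fintype.sum_bool, Bool.not_true, Bool.not_false]
  rw [add_comm]

lemma approx_le_symm (α δ p q : ℝ) :
    approxRenyiDiv α δ (Ber (1-p)) (Ber (1-q)) ≤ approxRenyiDiv α δ (Ber p) (Ber q) := by
  apply sInf_le_sInf_of_isCoinitialFor
  rintro d ⟨P', P'', Q', Q'', hP', hP'', hQ', hQ'', hcP, hcQ, rfl⟩
  refine ⟨renyiDiv α P' Q', ⟨fun b => P' (!b), fun b => P'' (!b), fun b => Q' (!b),
    fun b => Q'' (!b), isPMF_comp_not hP', isPMF_comp_not hP'', isPMF_comp_not hQ',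
    isPMF_comp_not hQ'', fun x => by rw [← Ber_not p x]; exact hcP (!x),
    fun x => by rw [← Ber_not q x]; exact hcQ (!x),
    (renyiDiv_comp_not α P' Q').symm⟩, le_rfl⟩

lemma approx_symm (α δ p q : ℝ) :
    approxRenyiDiv α δ (Ber p) (Ber q) = approxRenyiDiv α δ (Ber (1-p)) (Ber (1-q)) := by
  refine le_antisymm ?_ (approx_le_symm α δ p q)
  have h := approx_le_symm α δ (1-p) (1-q)
  rw [show (1:ℝ)-(1-p) = p by ring, show (1:ℝ)-(1-q) = q by ring] at h
  exact h

/-- Extract the real parameter of a PMF on Bool. -/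
lemma pmf_bool_eq_ber {Q : Bool → ℝ≥0∞} (h : IsPMF Q) :
    Q = Ber (Q true).toReal ∧ 0 ≤ (Q true).toReal ∧ (Q true).toReal ≤ 1 := by
  have hsum : Q true + Q false = 1 := by rw [IsPMF, Fintype.sum_bool] at h; exact h
  have htle : Q true ≤ 1 := le_of_le_of_eq le_self_add hsum
  have htne : Q true ≠ ⊤ := ne_top_of_le_ne_top ENNReal.one_ne_top htle
  set r : ℝ := (Q true).toReal with hrdef
  have hr0 : 0 ≤ r := ENNReal.toReal_nonneg
  have hr1 : r ≤ 1 := ENNReal.toReal_le_of_le_ofReal zero_le_one (by simpa using htle)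
  have hQt : Q true = ENNReal.ofReal r := (ENNReal.ofReal_toReal htne).symm
  have hQf : Q false = ENNReal.ofReal (1 - r) := by
    have h1 : Q false = 1 - Q true :=
      ENNReal.eq_sub_of_add_eq htne (by rw [add_comm]; exact hsum)
    rw [h1, hQt, ← ENNReal.ofReal_one, ← ENNReal.ofReal_sub _ hr0]
  refine ⟨funext fun b => ?_, hr0, hr1⟩
  cases b
  · exact hQf
  · exact hQt

lemma core (α δ p q1 q2 : ℝ) (hα : 1 < α) (hδ0 : 0 ≤ δ) (hδ1 : δ < 1)
    (hq1 : 0 ≤ q1) (h12 : q1 ≤ q2) (h2p : q2 ≤ p) (hp1 : p ≤ 1) :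
    approxRenyiDiv α δ (Ber p) (Ber q2) ≤ approxRenyiDiv α δ (Ber p) (Ber q1) := by
  have hd : (0:ℝ) < 1 - δ := by linarith
  have hq2 : 0 ≤ q2 := le_trans hq1 h12
  have hq21 : q2 ≤ 1 := le_trans h2p hp1
  have hq11 : q1 ≤ 1 := le_trans h12 hq21
  apply sInf_le_sInf_of_isCoinitialFor
  rintro d ⟨P', P'', Q', Q'', hP', hP'', hQ', hQ'', hcP, hcQ, rfl⟩
  obtain ⟨hQber, hr0, hr1⟩ := pmf_bool_eq_ber hQ'
  set r : ℝ := (Q' true).toReal with hrdef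
  obtain ⟨hPber, hp'0, hp'1⟩ := pmf_bool_eq_ber hP'
  set p' : ℝ := (P' true).toReal with hp'def
  -- real constraints from the decompositions
  have hofle : ∀ {a c : ℝ≥0∞} {u v : ℝ}, 0 ≤ u → 0 ≤ v →
      ENNReal.ofReal v = a + c → a = ENNReal.ofReal u → u ≤ v := by
    intro a c u v hu hv heq ha
    have : ENNReal.ofReal u ≤ ENNReal.ofReal v := by
      rw [heq, ← ha]; exact le_self_add
    exact (ENNReal.ofReal_le_ofReal_iff hv).mp this
  have hc_true : (1-δ) * r ≤ q1 := by
    have h := hcQ true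
    simp only [Ber, if_true] at h
    refine hofle (mul_nonneg (le_of_lt hd) hr0) hq1 h ?_
    rw [ENNReal.ofReal_mul (le_of_lt hd)]
    congr 1
    exact (ENNReal.ofReal_toReal (by
      have hsum : Q' true + Q' false = 1 := by rw [IsPMF, Fintype.sum_bool] at hQ'; exact hQ'
      exact ne_top_of_le_ne_top ENNReal.one_ne_top (le_of_le_of_eq le_self_add hsum))).symm
  have hc_pfalse : (1-δ) * (1-p') ≤ 1-p := by
    have h := hcP false
    simp only [Ber, Bool.false_eq_true, if_false] at h
    refine hofle (mul_nonneg (le_of_lt hd) (by linarith)) (by linarith) h ?_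
    rw [ENNReal.ofReal_mul (le_of_lt hd)]
    congr 1
    have := congrFun hPber false
    simpa [Ber] using this
  -- the new parameter
  set L : ℝ := 1 - (1-q2)/(1-δ) with hLdef
  set r₂ : ℝ := max r L with hr₂def
  have hL1 : L ≤ 1 := by
    rw [hLdef]
    have : 0 ≤ (1-q2)/(1-δ) := div_nonneg (by linarith) (le_of_lt hd)
    linarith
  have hLid : (1-δ) * (1 - L) = 1 - q2 := by
    rw [hLdef]
    field_simp
    ring
  have hr₂0 : 0 ≤ r₂ := le_trans hr0 (le_max_left r L)
  have hr₂1 : r₂ ≤ 1 := max_le hr1 hL1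
  have hv1 : (1-δ) * r₂ ≤ q2 := by
    rw [hr₂def, mul_max_of_nonneg r L (le_of_lt hd)]
    apply max_le
    · linarith [hc_true]
    · nlinarith [hLid]
  have hv2 : (1-δ) * (1-r₂) ≤ 1-q2 := by
    have h1 : L ≤ r₂ := le_max_right r L
    nlinarith [hLid]
  have hLp : L ≤ p' := by
    have h1 : (1-δ) * (1-p') ≤ (1-δ) * (1-L) := by rw [hLid]; linarith
    have h2 : 1 - p' ≤ 1 - L := le_of_mul_le_mul_left h1 hd
    linarith
  -- the renyi divergence comparison
  have hren : renyiDiv α P' (Ber r₂) ≤ renyiDiv α P' Q' := by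
    rw [hQber]
    rcases le_or_gt L r with hLr | hLr
    · rw [hr₂def, max_eq_left hLr]
    · rw [hr₂def, max_eq_right (le_of_lt hLr)]
      exact renyiDiv_ber_mono hα hP' hr0 (le_of_lt hLr) hLp
  -- pointwise domination
  have hle : ∀ x, ENNReal.ofReal (1-δ) * Ber r₂ x ≤ Ber q2 x := by
    intro x
    cases x
    · simp only [Ber, Bool.false_eq_true, if_false]
      rw [← ENNReal.ofReal_mul (le_of_lt hd)]
      exact ENNReal.ofReal_le_ofReal hv2
    · simp only [Ber, if_true]
      rw [← ENNReal.ofReal_mul (le_of_lt hd)]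
      exact ENNReal.ofReal_le_ofReal hv1
  by_cases hδ : δ = 0
  · -- δ = 0 : forced decomposition
    subst hδ
    have hrq1 : r ≤ q1 := by linarith [hc_true]
    have hLq2 : L = q2 := by rw [hLdef]; norm_num
    have hr₂q2 : r₂ = q2 := by
      rw [hr₂def, hLq2, max_eq_right (by linarith)]
    refine ⟨renyiDiv α P' (Ber r₂), ⟨P', P'', Ber r₂, Q'', hP', hP'', ?_, hQ'', ?_, ?_, rfl⟩, hren⟩
    · rw [IsPMF, Fintype.sum_bool]
      simp only [Ber, if_true, Bool.false_eq_true, if_false]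
      rw [← ENNReal.ofReal_add hr₂0 (by linarith), show r₂ + (1 - r₂) = 1 by ring,
        ENNReal.ofReal_one]
    · exact hcP
    · intro x
      simp only [sub_zero, ENNReal.ofReal_one, ENNReal.ofReal_zero, one_mul, zero_mul, add_zero]
      rw [hr₂q2]
  · -- δ > 0
    have hδpos : 0 < δ := lt_of_le_of_ne hδ0 (Ne.symm hδ)
    have hcδ0 : ENNReal.ofReal δ ≠ 0 := by simp [ENNReal.ofReal_pos.mpr hδpos, ne_of_gt]
    have hcδtop : ENNReal.ofReal δ ≠ ⊤ := ENNReal.ofReal_ne_top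
    set Q2'' : Bool → ℝ≥0∞ :=
      fun x => (ENNReal.ofReal δ)⁻¹ * (Ber q2 x - ENNReal.ofReal (1-δ) * Ber r₂ x) with hQ2def
    refine ⟨renyiDiv α P' (Ber r₂), ⟨P', P'', Ber r₂, Q2'', hP', hP'', ?_, ?_, hcP, ?_, rfl⟩, hren⟩
    · rw [IsPMF, Fintype.sum_bool]
      simp only [Ber, if_true, Bool.false_eq_true, if_false]
      rw [← ENNReal.ofReal_add hr₂0 (by linarith), show r₂ + (1 - r₂) = 1 by ring,
        ENNReal.ofReal_one]
    · rw [IsPMF, Fintype.sum_bool, hQ2def]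
      simp only
      rw [← mul_add]
      have e1 : Ber q2 true - ENNReal.ofReal (1-δ) * Ber r₂ true
          = ENNReal.ofReal (q2 - (1-δ) * r₂) := by
        simp only [Ber, if_true]
        rw [← ENNReal.ofReal_mul (le_of_lt hd), ENNReal.ofReal_sub _ (mul_nonneg (le_of_lt hd) hr₂0)]
      have e2 : Ber q2 false - ENNReal.ofReal (1-δ) * Ber r₂ false
          = ENNReal.ofReal ((1-q2) - (1-δ) * (1-r₂)) := by
        simp only [Ber, Bool.false_eq_true, if_false]
        rw [← ENNReal.ofReal_mul (le_of_lt hd),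
          ENNReal.ofReal_sub _ (mul_nonneg (le_of_lt hd) (by linarith))]
      rw [e1, e2, ← ENNReal.ofReal_add (by linarith) (by linarith),
        show q2 - (1-δ)*r₂ + ((1-q2) - (1-δ)*(1-r₂)) = δ by ring,
        ENNReal.inv_mul_cancel hcδ0 hcδtop]
    · intro x
      rw [hQ2def]
      simp only
      rw [← mul_assoc, ENNReal.mul_inv_cancel hcδ0 hcδtop, one_mul,
        add_tsub_cancel_of_le (hle x)]

/-- For α > 1, δ ∈ [0,1) and fixed p ∈ [0,1], q ↦ D_α^δ(Ber(p)‖Ber(q)) is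
non-increasing on [0,p] and non-decreasing on [p,1]. -/
theorem stmt4 (α δ p : ℝ) (hα : 1 < α) (hδ : δ ∈ Set.Ico (0:ℝ) 1)
    (hp : p ∈ Set.Icc (0:ℝ) 1) :
    AntitoneOn (fun q => approxRenyiDiv α δ (Ber p) (Ber q)) (Set.Icc 0 p) ∧
    MonotoneOn (fun q => approxRenyiDiv α δ (Ber p) (Ber q)) (Set.Icc p 1) := by
  obtain ⟨hδ0, hδ1⟩ := hδ
  obtain ⟨hp0, hp1⟩ := hp
  constructor
  · intro q1 hq1 q2 hq2 h12
    exact core α δ p q1 q2 hα hδ0 hδ1 hq1.1 h12 hq2.2 hp1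
  · intro q1 hq1 q2 hq2 h12
    simp only
    rw [approx_symm α δ p q1, approx_symm α δ p q2]
    exact core α δ (1-p) (1-q2) (1-q1) hα hδ0 hδ1 (by linarith [hq2.2])
      (by linarith) (by linarith [hq1.1]) (by linarith)
end

section
/- If mechanisms M₁ and M₂ (on the same input space, with the same neighboring relation) satisfy δ₁-approximate (α, ε₁)-RDP and δ₂-approximate (α, ε₂)-RDP respectively, then the composed mechanism X ↦ (M₁(X), M₂(X)) (with independent randomness) satisfies δ-approximate (α, ε₁+ε₂)-RDP where δ = δ₁ + δ₂ − δ₁δ₂. -/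
open scoped ENNReal

/-- A mechanism satisfies δ-approximate (α, ε)-RDP. -/
def ApproxRDP {I Y : Type*} [Fintype Y] (Neighbor : I → I → Prop)
    (M : I → Y → ℝ≥0∞) (δ α ε : ℝ) : Prop :=
  ∀ X X', Neighbor X X' → approxRenyiDiv α δ (M X) (M X') ≤ (ε : EReal)

section Aux

lemma my_mul_ne_bot {c : ℝ} (hc : 0 < c) {v : EReal} (hv : v ≠ ⊥) : (c : EReal) * v ≠ ⊥ := by
  have hc' : (0 : EReal) < (c : EReal) := by exact_mod_cast hc
  induction v using EReal.rec with
  | bot => exact absurd rfl hv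
  | coe y => rw [← EReal.coe_mul]; exact EReal.coe_ne_bot _
  | top => rw [EReal.mul_top_of_pos hc']; exact top_ne_bot

lemma my_mul_add_of_pos {c : ℝ} (hc : 0 < c) {u v : EReal} (hu : u ≠ ⊥) (hv : v ≠ ⊥) :
    (c : EReal) * (u + v) = (c : EReal) * u + (c : EReal) * v := by
  have hc' : (0 : EReal) < (c : EReal) := by exact_mod_cast hc
  induction u using EReal.rec with
  | bot => exact absurd rfl hu
  | top =>
    rw [EReal.top_add_of_ne_bot hv, EReal.mul_top_of_pos hc',
      EReal.top_add_of_ne_bot (my_mul_ne_bot hc hv)]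
  | coe x =>
    induction v using EReal.rec with
    | bot => exact absurd rfl hv
    | coe y =>
      rw [← EReal.coe_add, ← EReal.coe_mul, ← EReal.coe_mul, ← EReal.coe_mul, ← EReal.coe_add,
        mul_add]
    | top =>
      rw [EReal.coe_add_top, EReal.mul_top_of_pos hc', ← EReal.coe_mul, EReal.coe_add_top]

lemma pmf_ne_top {X : Type*} [Fintype X] {P : X → ℝ≥0∞} (h : IsPMF P) (x : X) : P x ≠ ⊤ := by
  have hle : P x ≤ 1 := h ▸ Finset.single_le_sum (f := P) (fun i _ => zero_le) (Finset.mem_univ x)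
  exact ne_top_of_le_ne_top ENNReal.one_ne_top hle

lemma pmf_exists_ne_zero {X : Type*} [Fintype X] {P : X → ℝ≥0∞} (h : IsPMF P) :
    ∃ x, P x ≠ 0 := by
  by_contra h'
  push_neg at h'
  unfold IsPMF at h
  rw [Finset.sum_eq_zero (fun x _ => h' x)] at h
  simp at h

lemma renyi_sum_ne_zero {X : Type*} [Fintype X] {α : ℝ} (hα : 1 < α) {P Q : X → ℝ≥0∞}
    (hP : IsPMF P) (hQ : IsPMF Q) : (∑ x, P x ^ α * Q x ^ (1 - α)) ≠ 0 := by
  obtain ⟨x, hx⟩ := pmf_exists_ne_zero hP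
  intro h0
  rw [Finset.sum_eq_zero_iff] at h0
  have hterm := h0 x (Finset.mem_univ x)
  rcases mul_eq_zero.mp hterm with h | h
  · rw [ENNReal.rpow_eq_zero_iff] at h
    rcases h with ⟨h, _⟩ | ⟨h, _⟩
    · exact hx h
    · exact pmf_ne_top hP x h
  · rw [ENNReal.rpow_eq_zero_iff] at h
    rcases h with ⟨_, h⟩ | ⟨h, _⟩
    · linarith
    · exact pmf_ne_top hQ x h

lemma renyiDiv_prod {Y₁ Y₂ : Type*} [Fintype Y₁] [Fintype Y₂] {α : ℝ} (hα : 1 < α)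
    {P₁ Q₁ : Y₁ → ℝ≥0∞} {P₂ Q₂ : Y₂ → ℝ≥0∞}
    (hP₁ : IsPMF P₁) (hP₂ : IsPMF P₂) (hQ₁ : IsPMF Q₁) (hQ₂ : IsPMF Q₂) :
    renyiDiv α (fun y : Y₁ × Y₂ => P₁ y.1 * P₂ y.2) (fun y => Q₁ y.1 * Q₂ y.2)
      = renyiDiv α P₁ Q₁ + renyiDiv α P₂ Q₂ := by
  have key : ∑ y : Y₁ × Y₂, (P₁ y.1 * P₂ y.2) ^ α * (Q₁ y.1 * Q₂ y.2) ^ (1 - α)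
      = (∑ x, P₁ x ^ α * Q₁ x ^ (1 - α)) * (∑ x, P₂ x ^ α * Q₂ x ^ (1 - α)) := by
    rw [Fintype.sum_mul_sum, Fintype.sum_prod_type]
    refine Finset.sum_congr rfl fun x _ => Finset.sum_congr rfl fun y _ => ?_
    rw [ENNReal.mul_rpow_of_ne_top (pmf_ne_top hP₁ x) (pmf_ne_top hP₂ y),
        ENNReal.mul_rpow_of_ne_top (pmf_ne_top hQ₁ x) (pmf_ne_top hQ₂ y)]
    ring
  have hc : (0:ℝ) < (α - 1)⁻¹ := inv_pos.mpr (by linarith)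
  have hA : ENNReal.log (∑ x, P₁ x ^ α * Q₁ x ^ (1 - α)) ≠ ⊥ := fun h =>
    renyi_sum_ne_zero hα hP₁ hQ₁ (ENNReal.log_eq_bot_iff.mp h)
  have hB : ENNReal.log (∑ x, P₂ x ^ α * Q₂ x ^ (1 - α)) ≠ ⊥ := fun h =>
    renyi_sum_ne_zero hα hP₂ hQ₂ (ENNReal.log_eq_bot_iff.mp h)
  unfold renyiDiv
  rw [key, ENNReal.log_mul_add, my_mul_add_of_pos hc hA hB]

lemma decomp_prod {Y₁ Y₂ : Type*} [Fintype Y₁] [Fintype Y₂] {δ₁ δ₂ : ℝ}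
    (hδ₁ : δ₁ ∈ Set.Ico (0:ℝ) 1) (hδ₂ : δ₂ ∈ Set.Ico (0:ℝ) 1)
    {P₁ : Y₁ → ℝ≥0∞} {P₂ : Y₂ → ℝ≥0∞} {P₁' P₁'' : Y₁ → ℝ≥0∞} {P₂' P₂'' : Y₂ → ℝ≥0∞}
    (hP₁' : IsPMF P₁') (hP₁'' : IsPMF P₁'') (hP₂' : IsPMF P₂') (hP₂'' : IsPMF P₂'')
    (e₁ : ∀ x, P₁ x = ENNReal.ofReal (1 - δ₁) * P₁' x + ENNReal.ofReal δ₁ * P₁'' x)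
    (e₂ : ∀ x, P₂ x = ENNReal.ofReal (1 - δ₂) * P₂' x + ENNReal.ofReal δ₂ * P₂'' x) :
    ∃ P'' : Y₁ × Y₂ → ℝ≥0∞, IsPMF P'' ∧
      ∀ y : Y₁ × Y₂, P₁ y.1 * P₂ y.2 =
        ENNReal.ofReal (1 - (δ₁ + δ₂ - δ₁ * δ₂)) * (P₁' y.1 * P₂' y.2) +
        ENNReal.ofReal (δ₁ + δ₂ - δ₁ * δ₂) * P'' y := by
  obtain ⟨h10, h11⟩ := hδ₁
  obtain ⟨h20, h21⟩ := hδ₂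
  set δ : ℝ := δ₁ + δ₂ - δ₁ * δ₂ with hδdef
  have hδ0 : 0 ≤ δ := by nlinarith
  have prodsum : ∀ (f : Y₁ → ℝ≥0∞) (g : Y₂ → ℝ≥0∞), IsPMF f → IsPMF g →
      ∑ y : Y₁ × Y₂, f y.1 * g y.2 = 1 := by
    intro f g hf hg
    have h : ∑ y : Y₁ × Y₂, f y.1 * g y.2 = (∑ x, f x) * ∑ x, g x := by
      rw [Fintype.sum_mul_sum, Fintype.sum_prod_type]
    rw [h, hf, hg, one_mul]
  by_cases hδz : δ = 0
  · have hd1 : δ₁ = 0 := by nlinarith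
    have hd2 : δ₂ = 0 := by nlinarith
    refine ⟨fun y => P₁' y.1 * P₂' y.2, prodsum _ _ hP₁' hP₂', fun y => ?_⟩
    rw [e₁, e₂, hδz, hd1, hd2]
    simp
  · set R : Y₁ × Y₂ → ℝ≥0∞ := fun y =>
      ENNReal.ofReal ((1 - δ₁) * δ₂) * (P₁' y.1 * P₂'' y.2) +
      ENNReal.ofReal (δ₁ * (1 - δ₂)) * (P₁'' y.1 * P₂' y.2) +
      ENNReal.ofReal (δ₁ * δ₂) * (P₁'' y.1 * P₂'' y.2) with hR
    have hδpos : (0:ℝ) < δ := lt_of_le_of_ne hδ0 (Ne.symm hδz)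
    have hofδ0 : ENNReal.ofReal δ ≠ 0 := by
      rw [Ne, ENNReal.ofReal_eq_zero]; linarith
    have sumR : ∑ y, R y = ENNReal.ofReal δ := by
      rw [hR]
      simp only [Finset.sum_add_distrib, ← Finset.mul_sum]
      rw [prodsum _ _ hP₁' hP₂'', prodsum _ _ hP₁'' hP₂', prodsum _ _ hP₁'' hP₂'']
      rw [mul_one, mul_one, mul_one,
        ← ENNReal.ofReal_add (by nlinarith) (by nlinarith),
        ← ENNReal.ofReal_add (by nlinarith) (by nlinarith)]
      congr 1
      ring
    refine ⟨fun y => (ENNReal.ofReal δ)⁻¹ * R y, ?_, fun y => ?_⟩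
    · unfold IsPMF
      rw [← Finset.mul_sum, sumR, ENNReal.inv_mul_cancel hofδ0 ENNReal.ofReal_ne_top]
    · have hcanc : ENNReal.ofReal δ * ((ENNReal.ofReal δ)⁻¹ * R y) = R y := by
        rw [← mul_assoc, ENNReal.mul_inv_cancel hofδ0 ENNReal.ofReal_ne_top, one_mul]
      rw [hcanc, e₁, e₂, hR]
      have h11' : ENNReal.ofReal (1 - δ₁) * ENNReal.ofReal (1 - δ₂)
          = ENNReal.ofReal (1 - δ) := by
        rw [← ENNReal.ofReal_mul (by linarith)]; congr 1; ring
      have h12' : ENNReal.ofReal (1 - δ₁) * ENNReal.ofReal δ₂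
          = ENNReal.ofReal ((1 - δ₁) * δ₂) := by
        rw [← ENNReal.ofReal_mul (by linarith)]
      have h21' : ENNReal.ofReal δ₁ * ENNReal.ofReal (1 - δ₂)
          = ENNReal.ofReal (δ₁ * (1 - δ₂)) := by
        rw [← ENNReal.ofReal_mul (by linarith)]
      have h22' : ENNReal.ofReal δ₁ * ENNReal.ofReal δ₂
          = ENNReal.ofReal (δ₁ * δ₂) := by
        rw [← ENNReal.ofReal_mul (by linarith)]
      calc (ENNReal.ofReal (1 - δ₁) * P₁' y.1 + ENNReal.ofReal δ₁ * P₁'' y.1) *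
            (ENNReal.ofReal (1 - δ₂) * P₂' y.2 + ENNReal.ofReal δ₂ * P₂'' y.2)
          = ENNReal.ofReal (1 - δ₁) * ENNReal.ofReal (1 - δ₂) * (P₁' y.1 * P₂' y.2) +
            (ENNReal.ofReal (1 - δ₁) * ENNReal.ofReal δ₂ * (P₁' y.1 * P₂'' y.2) +
             ENNReal.ofReal δ₁ * ENNReal.ofReal (1 - δ₂) * (P₁'' y.1 * P₂' y.2) +
             ENNReal.ofReal δ₁ * ENNReal.ofReal δ₂ * (P₁'' y.1 * P₂'' y.2)) := by ring
        _ = ENNReal.ofReal (1 - δ) * (P₁' y.1 * P₂' y.2) +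
            (ENNReal.ofReal ((1 - δ₁) * δ₂) * (P₁' y.1 * P₂'' y.2) +
             ENNReal.ofReal (δ₁ * (1 - δ₂)) * (P₁'' y.1 * P₂' y.2) +
             ENNReal.ofReal (δ₁ * δ₂) * (P₁'' y.1 * P₂'' y.2)) := by
              rw [h11', h12', h21', h22']

end Aux


lemma pmf_prod {Y₁ Y₂ : Type*} [Fintype Y₁] [Fintype Y₂] {f : Y₁ → ℝ≥0∞} {g : Y₂ → ℝ≥0∞}
    (hf : IsPMF f) (hg : IsPMF g) : IsPMF (fun y : Y₁ × Y₂ => f y.1 * g y.2) := by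
  unfold IsPMF
  have h : ∑ y : Y₁ × Y₂, f y.1 * g y.2 = (∑ x, f x) * ∑ x, g x := by
    rw [Fintype.sum_mul_sum, Fintype.sum_prod_type]
  rw [h, hf, hg, one_mul]


/-- Composition of approximate RDP: if M₁ is δ₁-approx (α,ε₁)-RDP and M₂ is
δ₂-approx (α,ε₂)-RDP, then X ↦ (M₁(X), M₂(X)) with independent randomness is
(δ₁ + δ₂ − δ₁δ₂)-approx (α, ε₁+ε₂)-RDP. -/
theorem stmt5 {I Y₁ Y₂ : Type*} [Fintype Y₁] [Fintype Y₂]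
    (Neighbor : I → I → Prop) (M₁ : I → Y₁ → ℝ≥0∞) (M₂ : I → Y₂ → ℝ≥0∞)
    (hM₁ : ∀ X, IsPMF (M₁ X)) (hM₂ : ∀ X, IsPMF (M₂ X))
    (α ε₁ ε₂ δ₁ δ₂ : ℝ) (hα : 1 < α)
    (hδ₁ : δ₁ ∈ Set.Ico (0:ℝ) 1) (hδ₂ : δ₂ ∈ Set.Ico (0:ℝ) 1)
    (h₁ : ApproxRDP Neighbor M₁ δ₁ α ε₁) (h₂ : ApproxRDP Neighbor M₂ δ₂ α ε₂) :
    ApproxRDP Neighbor (fun X (y : Y₁ × Y₂) => M₁ X y.1 * M₂ X y.2)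
      (δ₁ + δ₂ - δ₁ * δ₂) α (ε₁ + ε₂) := by
  intro X X' hN
  have s₁ := h₁ X X' hN
  have s₂ := h₂ X X' hN
  by_contra hcon
  push_neg at hcon
  obtain ⟨z, hz1, hz2⟩ := EReal.exists_between_coe_real hcon
  set η : ℝ := (z - (ε₁ + ε₂)) / 2 with hη
  have hzgt : (ε₁ + ε₂ : ℝ) < z := by exact_mod_cast hz1
  have hηpos : 0 < η := by rw [hη]; linarith
  have l₁ : approxRenyiDiv α δ₁ (M₁ X) (M₁ X') < ((ε₁ + η : ℝ) : EReal) :=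
    lt_of_le_of_lt s₁ (by exact_mod_cast (by linarith : ε₁ < ε₁ + η))
  have l₂ : approxRenyiDiv α δ₂ (M₂ X) (M₂ X') < ((ε₂ + η : ℝ) : EReal) :=
    lt_of_le_of_lt s₂ (by exact_mod_cast (by linarith : ε₂ < ε₂ + η))
  rw [approxRenyiDiv, sInf_lt_iff] at l₁ l₂
  obtain ⟨d₁, hd₁mem, hd₁lt⟩ := l₁
  obtain ⟨d₂, hd₂mem, hd₂lt⟩ := l₂
  obtain ⟨P₁', P₁'', Q₁', Q₁'', hP₁', hP₁'', hQ₁', hQ₁'', eP₁, eQ₁, hd₁eq⟩ := hd₁mem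
  obtain ⟨P₂', P₂'', Q₂', Q₂'', hP₂', hP₂'', hQ₂', hQ₂'', eP₂, eQ₂, hd₂eq⟩ := hd₂mem
  obtain ⟨P'', hP''pmf, eP⟩ := decomp_prod hδ₁ hδ₂ hP₁' hP₁'' hP₂' hP₂'' eP₁ eP₂
  obtain ⟨Q'', hQ''pmf, eQ⟩ := decomp_prod hδ₁ hδ₂ hQ₁' hQ₁'' hQ₂' hQ₂'' eQ₁ eQ₂
  have hmem : (d₁ + d₂) ∈ { d : EReal | ∃ P' P'' Q' Q'' : Y₁ × Y₂ → ℝ≥0∞,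
      IsPMF P' ∧ IsPMF P'' ∧ IsPMF Q' ∧ IsPMF Q'' ∧
      (∀ y, M₁ X y.1 * M₂ X y.2 =
        ENNReal.ofReal (1 - (δ₁ + δ₂ - δ₁ * δ₂)) * P' y +
        ENNReal.ofReal (δ₁ + δ₂ - δ₁ * δ₂) * P'' y) ∧
      (∀ y, M₁ X' y.1 * M₂ X' y.2 =
        ENNReal.ofReal (1 - (δ₁ + δ₂ - δ₁ * δ₂)) * Q' y +
        ENNReal.ofReal (δ₁ + δ₂ - δ₁ * δ₂) * Q'' y) ∧
      d = renyiDiv α P' Q' } := by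
    refine ⟨fun y => P₁' y.1 * P₂' y.2, P'', fun y => Q₁' y.1 * Q₂' y.2, Q'',
      pmf_prod hP₁' hP₂', hP''pmf, pmf_prod hQ₁' hQ₂', hQ''pmf, eP, eQ, ?_⟩
    rw [hd₁eq, hd₂eq, renyiDiv_prod hα hP₁' hP₂' hQ₁' hQ₂']
  have hle : approxRenyiDiv α (δ₁ + δ₂ - δ₁ * δ₂)
      (fun y : Y₁ × Y₂ => M₁ X y.1 * M₂ X y.2)
      (fun y : Y₁ × Y₂ => M₁ X' y.1 * M₂ X' y.2) ≤ d₁ + d₂ := sInf_le hmem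
  have hsum : d₁ + d₂ < (z : EReal) := by
    have h := EReal.add_lt_add hd₁lt hd₂lt
    rwa [← EReal.coe_add, show (ε₁ + η) + (ε₂ + η) = z by rw [hη]; ring] at h
  exact absurd (hz2.trans_le (hle.trans hsum.le)) (lt_irrefl _)
end

section
/- Let M satisfy δ-approximate (α, ε)-RDP for some α > 1. Then for any ε̂ ≥ 0, M satisfies (ε̂, δ̂)-differential privacy where δ̂ = δ + (exp((α−1)(ε−ε̂))/α) · (1 − 1/α)^{α−1}. -/
open scoped ENNReal

lemma holder_step {Y : Type*} [Fintype Y] (P Q : Y → ℝ≥0∞) {α : ℝ} (hα : 1 < α)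
    (hQT : ∀ y, Q y ≠ ⊤) (hac : ∀ y, Q y = 0 → P y = 0) (S : Finset Y) :
    ∑ y ∈ S, P y ≤
      (∑ y ∈ S, P y ^ α * Q y ^ (1 - α)) ^ (1/α) * (∑ y ∈ S, Q y) ^ (1 - 1/α) := by
  have hα0 : (0:ℝ) < α := by linarith
  have hα1 : (0:ℝ) < α - 1 := by linarith
  have hconj : α.HolderConjugate (α / (α - 1)) := Real.HolderConjugate.conjExponent hα
  have key := ENNReal.inner_le_Lp_mul_Lq S (fun y => P y * Q y ^ ((1-α)/α))
      (fun y => Q y ^ ((α-1)/α)) hconj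
  have h1 : ∀ y, (P y * Q y ^ ((1-α)/α)) * Q y ^ ((α-1)/α) = P y := by
    intro y
    rcases eq_or_ne (Q y) 0 with h0 | h0
    · rw [hac y h0, h0]
      rw [ENNReal.zero_rpow_of_pos (div_pos hα1 hα0)]
      simp
    · rw [mul_assoc, ← ENNReal.rpow_add _ _ h0 (hQT y)]
      have : (1-α)/α + (α-1)/α = 0 := by field_simp; ring
      rw [this, ENNReal.rpow_zero, mul_one]
  have h2 : ∀ y, (P y * Q y ^ ((1-α)/α)) ^ α = P y ^ α * Q y ^ (1 - α) := by
    intro y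
    rw [ENNReal.mul_rpow_of_nonneg _ _ hα0.le, ← ENNReal.rpow_mul]
    congr 1
    field_simp
  have h3 : ∀ y, (Q y ^ ((α-1)/α)) ^ (α/(α-1)) = Q y := by
    intro y
    rw [← ENNReal.rpow_mul]
    have : (α-1)/α * (α/(α-1)) = 1 := by field_simp
    rw [this, ENNReal.rpow_one]
  have h4 : 1 / (α/(α-1)) = 1 - 1/α := by field_simp
  simp only [h1, h2, h3, h4] at key
  exact key

lemma rdp_to_dp {Y : Type*} [Fintype Y] (P Q : Y → ℝ≥0∞) (hP : IsPMF P) (hQ : IsPMF Q)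
    {α ε' εhat : ℝ} (hα : 1 < α) (hεhat : 0 ≤ εhat)
    (hdiv : renyiDiv α P Q ≤ (ε' : EReal)) (S : Finset Y) :
    ∑ y ∈ S, P y ≤ ENNReal.ofReal (Real.exp εhat) * ∑ y ∈ S, Q y +
      ENNReal.ofReal (Real.exp ((α - 1) * (ε' - εhat)) / α * (1 - 1 / α) ^ (α - 1)) := by
  have hα0 : (0:ℝ) < α := by linarith
  have hα1 : (0:ℝ) < α - 1 := by linarith
  have h1α : (0:ℝ) < 1 - 1/α := by
    have : 1/α < 1 := by rw [div_lt_one hα0]; linarith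
    linarith
  set A := ∑ x, P x ^ α * Q x ^ (1 - α) with hAdef
  -- Step 1: A ≤ exp((α-1) ε')
  have hlogA : ENNReal.log A ≤ (((α - 1) * ε' : ℝ) : EReal) := by
    unfold renyiDiv at hdiv
    rw [EReal.coe_inv, ← EReal.div_eq_inv_mul] at hdiv
    rw [EReal.div_le_iff_le_mul (by exact_mod_cast hα1) (EReal.coe_ne_top _)] at hdiv
    rwa [← EReal.coe_mul] at hdiv
  have hA : A ≤ ENNReal.ofReal (Real.exp ((α - 1) * ε')) := by
    calc A = EReal.exp (ENNReal.log A) := (ENNReal.exp_log A).symm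
    _ ≤ EReal.exp (((α - 1) * ε' : ℝ) : EReal) := EReal.exp_monotone hlogA
    _ = ENNReal.ofReal (Real.exp ((α - 1) * ε')) := EReal.exp_coe _
  have hAne : A ≠ ⊤ := ne_top_of_le_ne_top ENNReal.ofReal_ne_top hA
  have hle1 : ∀ (f : Y → ℝ≥0∞), IsPMF f → ∀ y, f y ≤ 1 := by
    intro f hf y
    rw [← hf]
    exact Finset.single_le_sum (fun i _ => zero_le) (Finset.mem_univ y)
  have hQT : ∀ y, Q y ≠ ⊤ := fun y => ne_top_of_le_ne_top (by simp) (hle1 Q hQ y)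
  have hac : ∀ y, Q y = 0 → P y = 0 := by
    intro y h0
    by_contra hne
    have hPya : P y ^ α ≠ 0 := by
      rw [ne_eq, ENNReal.rpow_eq_zero_iff]
      push_neg
      exact ⟨fun h => (hne h).elim, fun _ => hα0.le⟩
    have hterm : P y ^ α * Q y ^ (1 - α) = ⊤ := by
      rw [h0, ENNReal.zero_rpow_of_neg (by linarith), ENNReal.mul_top hPya]
    apply hAne
    refine top_le_iff.mp ?_
    rw [← hterm]
    exact Finset.single_le_sum (f := fun x => P x ^ α * Q x ^ (1 - α))
      (fun i _ => zero_le) (Finset.mem_univ y)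
  -- Hölder
  have hsub : ∑ y ∈ S, P y ^ α * Q y ^ (1 - α) ≤ A :=
    Finset.sum_le_sum_of_subset (Finset.subset_univ S)
  have hH : ∑ y ∈ S, P y ≤ A ^ (1/α) * (∑ y ∈ S, Q y) ^ (1 - 1/α) :=
    le_trans (holder_step P Q hα hQT hac S)
      (mul_le_mul_left (ENNReal.rpow_le_rpow hsub (by positivity)) _)
  -- finiteness
  have hsQ1 : ∑ y ∈ S, Q y ≤ 1 := hQ ▸ Finset.sum_le_sum_of_subset (Finset.subset_univ S)
  have hsP1 : ∑ y ∈ S, P y ≤ 1 := hP ▸ Finset.sum_le_sum_of_subset (Finset.subset_univ S)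
  have hsPne : ∑ y ∈ S, P y ≠ ⊤ := ne_top_of_le_ne_top (by simp) hsP1
  have hsQne : ∑ y ∈ S, Q y ≠ ⊤ := ne_top_of_le_ne_top (by simp) hsQ1
  have hRHSne : A ^ (1/α) * (∑ y ∈ S, Q y) ^ (1 - 1/α) ≠ ⊤ :=
    ENNReal.mul_ne_top (ENNReal.rpow_ne_top_of_nonneg (by positivity) hAne)
      (ENNReal.rpow_ne_top_of_nonneg h1α.le hsQne)
  -- to reals
  set p := (∑ y ∈ S, P y).toReal with hpdef
  set q := (∑ y ∈ S, Q y).toReal with hqdef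
  set a := A.toReal with hadef
  have hq0 : 0 ≤ q := ENNReal.toReal_nonneg
  have ha0 : 0 ≤ a := ENNReal.toReal_nonneg
  have hpr : p ≤ a ^ (1/α) * q ^ (1 - 1/α) := by
    have := ENNReal.toReal_mono hRHSne hH
    rwa [ENNReal.toReal_mul, ← ENNReal.toReal_rpow, ← ENNReal.toReal_rpow] at this
  have ha : a ≤ Real.exp ((α - 1) * ε') := by
    have := ENNReal.toReal_mono ENNReal.ofReal_ne_top hA
    rwa [ENNReal.toReal_ofReal (Real.exp_nonneg _)] at this
  -- real inequality
  set t : ℝ := Real.exp εhat * (α / (α - 1)) with htdef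
  have ht : 0 < t := by positivity
  have hw : 1/α + (1 - 1/α) = 1 := by ring
  have hbase : 1 - 1/α = (α-1)/α := by field_simp
  have step1 : a ^ (1/α) * q ^ (1 - 1/α) = (a / t^(α-1)) ^ (1/α) * (t*q) ^ (1 - 1/α) := by
    have htp : (t^(α-1)) ^ (1/α) = t ^ (1 - 1/α) := by
      rw [← Real.rpow_mul ht.le, show (α-1)*(1/α) = 1 - 1/α by field_simp]
    rw [Real.div_rpow ha0 (Real.rpow_nonneg ht.le _), Real.mul_rpow ht.le hq0, htp]
    have hT : (0:ℝ) < t ^ (1 - 1/α) := Real.rpow_pos_of_pos ht _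
    field_simp
  have step2 : (a / t^(α-1)) ^ (1/α) * (t*q) ^ (1 - 1/α) ≤
      (1/α) * (a / t^(α-1)) + (1 - 1/α) * (t*q) :=
    Real.geom_mean_le_arith_mean2_weighted (by positivity) h1α.le
      (by positivity) (by positivity) hw
  have step3 : (1 - 1/α) * (t*q) = Real.exp εhat * q := by
    rw [htdef]; field_simp
  have hpow_pos : (0:ℝ) < (1 - 1/α) ^ (α - 1) := Real.rpow_pos_of_pos h1α _
  have step4 : (1/α) * (a / t^(α-1)) ≤
      Real.exp ((α - 1) * (ε' - εhat)) / α * (1 - 1/α) ^ (α - 1) := by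
    have habase : (0:ℝ) < (α-1)/α := by positivity
    have ht1 : t^(α-1) = Real.exp (εhat * (α-1)) * ((1 - 1/α) ^ (α-1))⁻¹ := by
      rw [htdef, Real.mul_rpow (Real.exp_nonneg _) (by positivity), ← Real.exp_mul]
      congr 1
      rw [hbase, ← Real.inv_rpow habase.le, inv_div]
    have hE : (0:ℝ) < Real.exp (εhat*(α-1)) := Real.exp_pos _
    calc (1/α) * (a / t^(α-1))
        = a * (1-1/α)^(α-1) / (α * Real.exp (εhat*(α-1))) := by
          rw [ht1]; field_simp
      _ ≤ Real.exp ((α-1)*ε') * (1-1/α)^(α-1) / (α * Real.exp (εhat*(α-1))) := by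
          gcongr
      _ = Real.exp ((α-1)*(ε'-εhat))/α * (1-1/α)^(α-1) := by
          rw [show (α-1)*(ε'-εhat) = (α-1)*ε' - εhat*(α-1) by ring, Real.exp_sub]
          field_simp
  have hreal : p ≤ Real.exp εhat * q +
      Real.exp ((α - 1) * (ε' - εhat)) / α * (1 - 1/α) ^ (α - 1) := by
    have := hpr.trans (step1.le.trans step2)
    rw [step3] at this
    linarith [step4]
  calc ∑ y ∈ S, P y = ENNReal.ofReal p := (ENNReal.ofReal_toReal hsPne).symm
    _ ≤ ENNReal.ofReal (Real.exp εhat * q +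
        Real.exp ((α - 1) * (ε' - εhat)) / α * (1 - 1/α) ^ (α - 1)) :=
          ENNReal.ofReal_le_ofReal hreal
    _ = ENNReal.ofReal (Real.exp εhat * q) +
        ENNReal.ofReal (Real.exp ((α - 1) * (ε' - εhat)) / α * (1 - 1/α) ^ (α - 1)) := by
          rw [ENNReal.ofReal_add (by positivity) (by positivity)]
    _ = ENNReal.ofReal (Real.exp εhat) * ∑ y ∈ S, Q y +
        ENNReal.ofReal (Real.exp ((α - 1) * (ε' - εhat)) / α * (1 - 1/α) ^ (α - 1)) := by
          rw [ENNReal.ofReal_mul (Real.exp_nonneg _), ENNReal.ofReal_toReal hsQne]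

/-- Conversion from δ-approximate (α, ε)-RDP to approximate DP. -/
theorem stmt7 {I Y : Type*} [Fintype Y] (Neighbor : I → I → Prop)
    (M : I → Y → ℝ≥0∞) (hM : ∀ X, IsPMF (M X))
    (α ε δ : ℝ) (hα : 1 < α) (hδ : δ ∈ Set.Ico (0:ℝ) 1)
    (hRDP : ∀ X X', Neighbor X X' → approxRenyiDiv α δ (M X) (M X') ≤ (ε : EReal))
    (εhat : ℝ) (hεhat : 0 ≤ εhat) :
    ∀ X X', Neighbor X X' → ∀ S : Finset Y,
      ∑ y ∈ S, M X y ≤ ENNReal.ofReal (Real.exp εhat) * ∑ y ∈ S, M X' y +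
        ENNReal.ofReal
          (δ + Real.exp ((α - 1) * (ε - εhat)) / α * (1 - 1 / α) ^ (α - 1)) := by
  obtain ⟨hδ0, hδ1⟩ := hδ
  intro X X' hN S
  set g : ℝ → ℝ := fun e => Real.exp ((α - 1) * (e - εhat)) / α * (1 - 1 / α) ^ (α - 1)
    with hgdef
  have hα0 : (0:ℝ) < α := by linarith
  have h1α : (0:ℝ) < 1 - 1/α := by
    have : 1/α < 1 := by rw [div_lt_one hα0]; linarith
    linarith
  have hg0 : ∀ e, 0 ≤ g e := fun e => by
    have := (Real.rpow_pos_of_pos h1α (α-1)).le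
    have := (Real.exp_pos ((α - 1) * (e - εhat))).le
    positivity
  have hgcont : Continuous g := by
    apply Continuous.mul
    · exact (Real.continuous_exp.comp (by continuity)).div_const α
    · exact continuous_const
  refine ENNReal.le_of_forall_pos_le_add fun η hη hfin => ?_
  -- choose ε' > ε with g ε' < g ε + η
  have hev : ∀ᶠ e in nhdsWithin ε (Set.Ioi ε), g e < g ε + η := by
    apply Filter.Eventually.filter_mono nhdsWithin_le_nhds
    exact (hgcont.tendsto ε).eventually_lt_const (by
      have : (0:ℝ) < η := hη
      linarith)
  obtain ⟨ε', hgε', hε'⟩ := (hev.and eventually_mem_nhdsWithin).exists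
  rw [Set.mem_Ioi] at hε'
  -- extract witness
  have hlt : approxRenyiDiv α δ (M X) (M X') < (ε' : EReal) :=
    lt_of_le_of_lt (hRDP X X' hN) (by exact_mod_cast hε')
  rw [approxRenyiDiv, sInf_lt_iff] at hlt
  obtain ⟨d, ⟨P', P'', Q', Q'', hP', hP'', hQ', hQ'', hPdec, hQdec, hd⟩, hdlt⟩ := hlt
  have hdiv : renyiDiv α P' Q' ≤ (ε' : EReal) := by rw [← hd]; exact hdlt.le
  have hkey := rdp_to_dp P' Q' hP' hQ' hα hεhat hdiv S
  set E := ENNReal.ofReal (Real.exp εhat) with hEdef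
  set C' := ENNReal.ofReal (Real.exp ((α - 1) * (ε' - εhat)) / α * (1 - 1 / α) ^ (α - 1))
    with hC'def
  have hC'g : C' = ENNReal.ofReal (g ε') := rfl
  have hsplit : ∑ y ∈ S, M X y =
      ENNReal.ofReal (1 - δ) * ∑ y ∈ S, P' y + ENNReal.ofReal δ * ∑ y ∈ S, P'' y := by
    rw [Finset.mul_sum, Finset.mul_sum, ← Finset.sum_add_distrib]
    exact Finset.sum_congr rfl fun y _ => hPdec y
  have hsplitQ : ∑ y ∈ S, M X' y =
      ENNReal.ofReal (1 - δ) * ∑ y ∈ S, Q' y + ENNReal.ofReal δ * ∑ y ∈ S, Q'' y := by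
    rw [Finset.mul_sum, Finset.mul_sum, ← Finset.sum_add_distrib]
    exact Finset.sum_congr rfl fun y _ => hQdec y
  have hP''1 : ∑ y ∈ S, P'' y ≤ 1 := hP'' ▸ Finset.sum_le_sum_of_subset (Finset.subset_univ S)
  have hδle : ENNReal.ofReal (1 - δ) ≤ 1 := by
    rw [← ENNReal.ofReal_one]
    exact ENNReal.ofReal_le_ofReal (by linarith)
  calc ∑ y ∈ S, M X y
      = ENNReal.ofReal (1 - δ) * ∑ y ∈ S, P' y + ENNReal.ofReal δ * ∑ y ∈ S, P'' y := hsplit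
    _ ≤ ENNReal.ofReal (1 - δ) * (E * ∑ y ∈ S, Q' y + C') + ENNReal.ofReal δ * 1 := by
        gcongr
    _ = E * (ENNReal.ofReal (1 - δ) * ∑ y ∈ S, Q' y) + ENNReal.ofReal (1 - δ) * C' +
          ENNReal.ofReal δ := by ring
    _ ≤ E * (∑ y ∈ S, M X' y) + 1 * C' + ENNReal.ofReal δ := by
        gcongr
        · rw [hsplitQ]; exact le_self_add
    _ = E * (∑ y ∈ S, M X' y) + (ENNReal.ofReal (g ε') + ENNReal.ofReal δ) := by
        rw [one_mul, hC'g]; ring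
    _ ≤ E * (∑ y ∈ S, M X' y) + (ENNReal.ofReal (δ + g ε) + η) := by
        refine add_le_add_right ?_ _
        calc ENNReal.ofReal (g ε') + ENNReal.ofReal δ
            ≤ ENNReal.ofReal (g ε + η) + ENNReal.ofReal δ := by
              gcongr
          _ ≤ (ENNReal.ofReal (g ε) + ENNReal.ofReal (η:ℝ)) + ENNReal.ofReal δ := by
              gcongr
              exact ENNReal.ofReal_add_le
          _ = ENNReal.ofReal (δ + g ε) + η := by
              rw [ENNReal.ofReal_add hδ0 (hg0 ε), ENNReal.ofReal_coe_nnreal]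
              ring
    _ = E * (∑ y ∈ S, M X' y) + ENNReal.ofReal (δ + g ε) + η := by ring
end

section
/- Define L(q) = max{ p ∈ [q,1] : D_α^δ(Ber(p)‖Ber(q)) ≤ ε and D_α^δ(Ber(q)‖Ber(p)) ≤ ε }. Then L is monotone: for q₁ ≤ q₂ in [0,1], L(q₁) ≤ L(q₂). -/
open scoped ENNReal

/-- L(q) = max{ p ∈ [q,1] : D_α^δ(Ber(p)‖Ber(q)) ≤ ε ∧ D_α^δ(Ber(q)‖Ber(p)) ≤ ε }. -/
noncomputable def Lfun (α ε δ : ℝ) (q : ℝ) : ℝ :=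
  sSup {p : ℝ | p ∈ Set.Icc q 1 ∧
    approxRenyiDiv α δ (Ber p) (Ber q) ≤ (ε : EReal) ∧
    approxRenyiDiv α δ (Ber q) (Ber p) ≤ (ε : EReal)}

section Aux

variable {α : ℝ}

lemma rpow_mul_rpow_self (hα : 0 < α) {x : ℝ≥0∞} (hx : x ≠ ⊤) :
    x ^ α * x ^ (1 - α) = x := by
  rcases eq_or_ne x 0 with rfl | hx0
  · rw [ENNReal.zero_rpow_of_pos hα, zero_mul]
  · rw [← ENNReal.rpow_add _ _ hx0 hx]
    norm_num

lemma mul_inv_rpow {b : ℝ≥0∞} (hb0 : b ≠ 0) (hbt : b ≠ ⊤) (α : ℝ) :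
    b * (b ^ α)⁻¹ = b ^ (1 - α) := by
  rw [← ENNReal.rpow_neg]
  nth_rewrite 1 [← ENNReal.rpow_one b]
  rw [← ENNReal.rpow_add _ _ hb0 hbt, sub_eq_add_neg]

lemma aux_cancel (hα : 0 ≤ α) {b : ℝ≥0∞} (hb0 : b ≠ 0) (hbt : b ≠ ⊤) (a : ℝ≥0∞) :
    b * (a / b) ^ α = a ^ α * b ^ (1 - α) := by
  rw [ENNReal.div_rpow_of_nonneg _ _ hα, div_eq_mul_inv, mul_comm b, mul_assoc,
    mul_comm _ b, mul_inv_rpow hb0 hbt]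

lemma ennreal_ne_top_of_add_eq_one {a a' : ℝ≥0∞} (h : a + a' = 1) : a ≠ ⊤ := by
  have : a ≤ 1 := h ▸ le_self_add
  exact ne_top_of_le_ne_top ENNReal.one_ne_top this

lemma zero_rpow_neg_exp (hα : 1 < α) : (0:ℝ≥0∞) ^ (1 - α) = ⊤ := by
  rw [ENNReal.zero_rpow_def]
  rw [if_neg (by linarith : ¬ (0:ℝ) < 1 - α), if_neg (by intro hc; linarith : (1:ℝ) - α ≠ 0)]

lemma rpow_ne_zero_of_ne_zero {a : ℝ≥0∞} (ha0 : a ≠ 0) (hα : 0 < α) : a ^ α ≠ 0 := by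
  intro hc
  exact (ENNReal.rpow_eq_zero_iff.mp hc).elim (fun h => ha0 h.1) (fun h => absurd h.2 (by linarith))

lemma one_le_scalar (hα : 1 < α) {a a' b b' : ℝ≥0∞} (ha : a + a' = 1) (hb : b + b' = 1) :
    1 ≤ a ^ α * b ^ (1 - α) + a' ^ α * b' ^ (1 - α) := by
  have hαpos : (0:ℝ) < α := by linarith
  have hat : a ≠ ⊤ := ennreal_ne_top_of_add_eq_one ha
  have ha't : a' ≠ ⊤ := ennreal_ne_top_of_add_eq_one (by rwa [add_comm] at ha)
  have hbt : b ≠ ⊤ := ennreal_ne_top_of_add_eq_one hb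
  have hb't : b' ≠ ⊤ := ennreal_ne_top_of_add_eq_one (by rwa [add_comm] at hb)
  rcases eq_or_ne b 0 with rfl | hb0
  · rcases eq_or_ne a 0 with rfl | ha0
    · simp only [zero_add] at ha hb
      simp [ha, hb, ENNReal.one_rpow, ENNReal.zero_rpow_of_pos hαpos]
    · rw [zero_rpow_neg_exp hα, ENNReal.mul_top (rpow_ne_zero_of_ne_zero ha0 hαpos)]
      exact le_top
  rcases eq_or_ne b' 0 with rfl | hb'0
  · rcases eq_or_ne a' 0 with rfl | ha'0
    · simp only [add_zero] at ha hb
      simp [ha, hb, ENNReal.one_rpow, ENNReal.zero_rpow_of_pos hαpos]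
    · rw [zero_rpow_neg_exp hα, ENNReal.mul_top (rpow_ne_zero_of_ne_zero ha'0 hαpos)]
      simp
  · have key := ENNReal.rpow_arith_mean_le_arith_mean2_rpow b b' (a / b) (a' / b') hb hα.le
    rw [ENNReal.mul_div_cancel hb0 hbt, ENNReal.mul_div_cancel hb'0 hb't, ha,
      ENNReal.one_rpow, aux_cancel hαpos.le hb0 hbt, aux_cancel hαpos.le hb'0 hb't] at key
    exact key

lemma neg_rpow_convex (hα : 1 < α) {T T' b c : ℝ≥0∞} (hT : T + T' = 1)
    (hb : b ≠ ⊤) (hc : c ≠ ⊤) :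
    (T * b + T' * c) ^ (1 - α) ≤ T * b ^ (1 - α) + T' * c ^ (1 - α) := by
  rcases eq_or_ne T 0 with rfl | hT0
  · simp only [zero_add] at hT
    simp [hT]
  rcases eq_or_ne T' 0 with rfl | hT'0
  · simp only [add_zero] at hT
    simp [hT]
  have hTt : T ≠ ⊤ := ennreal_ne_top_of_add_eq_one hT
  have hT't : T' ≠ ⊤ := ennreal_ne_top_of_add_eq_one (by rwa [add_comm] at hT)
  rcases eq_or_ne b 0 with rfl | hb0
  · rw [zero_rpow_neg_exp hα, ENNReal.mul_top hT0]
    exact le_top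
  rcases eq_or_ne c 0 with rfl | hc0
  · rw [zero_rpow_neg_exp hα, ENNReal.mul_top hT'0]
    simp
  set u := T * b + T' * c with hu
  have hu0 : u ≠ 0 := by
    simp [hu, hT0, hb0, hT'0, hc0]
  have hut : u ≠ ⊤ := by
    simp [hu, ENNReal.add_ne_top, ENNReal.mul_ne_top hTt hb, ENNReal.mul_ne_top hT't hc]
  have hw : T * b / u + T' * c / u = 1 := by
    rw [ENNReal.div_add_div_same, ← hu, ENNReal.div_self hu0 hut]
  have key := ENNReal.rpow_arith_mean_le_arith_mean2_rpow (T * b / u) (T' * c / u) b⁻¹ c⁻¹ hw hα.le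
  have e1 : T * b / u * b⁻¹ = T / u := by
    rw [div_eq_mul_inv, div_eq_mul_inv, mul_right_comm, mul_assoc T, ENNReal.mul_inv_cancel hb0 hb,
      mul_one]
  have e2 : T' * c / u * c⁻¹ = T' / u := by
    rw [div_eq_mul_inv, div_eq_mul_inv, mul_right_comm, mul_assoc T', ENNReal.mul_inv_cancel hc0 hc,
      mul_one]
  have e3 : T * b / u * b⁻¹ ^ α = T * b ^ (1 - α) / u := by
    rw [ENNReal.inv_rpow, div_eq_mul_inv, div_eq_mul_inv, mul_right_comm, mul_assoc T,
      mul_inv_rpow hb0 hb]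
  have e4 : T' * c / u * c⁻¹ ^ α = T' * c ^ (1 - α) / u := by
    rw [ENNReal.inv_rpow, div_eq_mul_inv, div_eq_mul_inv, mul_right_comm, mul_assoc T',
      mul_inv_rpow hc0 hc]
  rw [e1, e2, e3, e4, ENNReal.div_add_div_same, ENNReal.div_add_div_same, hT,
    one_div, ENNReal.inv_rpow] at key
  have key2 := mul_le_mul_right key u
  rw [ENNReal.mul_div_cancel hu0 hut, mul_inv_rpow hu0 hut] at key2
  exact key2

end Aux

section Sums

variable {α : ℝ} {X : Type*} [Fintype X]

lemma IsPMF.ne_top {P : X → ℝ≥0∞} (hP : IsPMF P) (x : X) : P x ≠ ⊤ := by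
  have hx : P x ≤ 1 := hP ▸ Finset.single_le_sum (fun i _ => zero_le (a := P i)) (Finset.mem_univ x)
  exact ne_top_of_le_ne_top ENNReal.one_ne_top hx

lemma sum_self_eq_one (hα : 1 < α) {P : X → ℝ≥0∞} (hP : IsPMF P) :
    ∑ x, P x ^ α * P x ^ (1 - α) = 1 := by
  rw [Finset.sum_congr rfl (fun x _ => rpow_mul_rpow_self (by linarith) (hP.ne_top x))]
  exact hP

lemma sumA (hα : 1 < α) {P Q : X → ℝ≥0∞} (hP : IsPMF P) (hQ : IsPMF Q)
    {T T' : ℝ≥0∞} (hT : T + T' = 1)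
    (hS : 1 ≤ ∑ x, P x ^ α * Q x ^ (1 - α)) :
    ∑ x, P x ^ α * (T * Q x + T' * P x) ^ (1 - α) ≤ ∑ x, P x ^ α * Q x ^ (1 - α) := by
  set S := ∑ x, P x ^ α * Q x ^ (1 - α) with hSdef
  calc ∑ x, P x ^ α * (T * Q x + T' * P x) ^ (1 - α)
      ≤ ∑ x, (T * (P x ^ α * Q x ^ (1 - α)) + T' * (P x ^ α * P x ^ (1 - α))) := by
        refine Finset.sum_le_sum fun x _ => ?_
        calc P x ^ α * (T * Q x + T' * P x) ^ (1 - α)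
            ≤ P x ^ α * (T * Q x ^ (1 - α) + T' * P x ^ (1 - α)) :=
              mul_le_mul_right (neg_rpow_convex hα hT (hQ.ne_top x) (hP.ne_top x)) _
          _ = T * (P x ^ α * Q x ^ (1 - α)) + T' * (P x ^ α * P x ^ (1 - α)) := by ring
    _ = T * S + T' * (∑ x, P x ^ α * P x ^ (1 - α)) := by
        rw [Finset.sum_add_distrib, ← Finset.mul_sum, ← Finset.mul_sum]
    _ = T * S + T' * 1 := by rw [sum_self_eq_one hα hP]
    _ ≤ T * S + T' * S := add_le_add_right (mul_le_mul_right hS T') _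
    _ = S := by rw [← add_mul, hT, one_mul]

lemma sumB (hα : 1 < α) {P Q : X → ℝ≥0∞} (hP : IsPMF P) (hQ : IsPMF Q)
    {T T' : ℝ≥0∞} (hT : T + T' = 1)
    (hS : 1 ≤ ∑ x, P x ^ α * Q x ^ (1 - α)) :
    ∑ x, (T * P x + T' * Q x) ^ α * Q x ^ (1 - α) ≤ ∑ x, P x ^ α * Q x ^ (1 - α) := by
  set S := ∑ x, P x ^ α * Q x ^ (1 - α) with hSdef
  calc ∑ x, (T * P x + T' * Q x) ^ α * Q x ^ (1 - α)
      ≤ ∑ x, (T * (P x ^ α * Q x ^ (1 - α)) + T' * (Q x ^ α * Q x ^ (1 - α))) := by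
        refine Finset.sum_le_sum fun x _ => ?_
        calc (T * P x + T' * Q x) ^ α * Q x ^ (1 - α)
            ≤ (T * P x ^ α + T' * Q x ^ α) * Q x ^ (1 - α) :=
              mul_le_mul_left
                (ENNReal.rpow_arith_mean_le_arith_mean2_rpow T T' (P x) (Q x) hT hα.le) _
          _ = T * (P x ^ α * Q x ^ (1 - α)) + T' * (Q x ^ α * Q x ^ (1 - α)) := by ring
    _ = T * S + T' * (∑ x, Q x ^ α * Q x ^ (1 - α)) := by
        rw [Finset.sum_add_distrib, ← Finset.mul_sum, ← Finset.mul_sum]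
    _ = T * S + T' * 1 := by rw [sum_self_eq_one hα hQ]
    _ ≤ T * S + T' * S := add_le_add_right (mul_le_mul_right hS T') _
    _ = S := by rw [← add_mul, hT, one_mul]

lemma renyiDiv_mono (hα : 1 < α) {P Q P₂ Q₂ : X → ℝ≥0∞}
    (h : ∑ x, P₂ x ^ α * Q₂ x ^ (1 - α) ≤ ∑ x, P x ^ α * Q x ^ (1 - α)) :
    renyiDiv α P₂ Q₂ ≤ renyiDiv α P Q :=
  mul_le_mul_of_nonneg_left (ENNReal.log_monotone h)
    (by exact_mod_cast (inv_nonneg.mpr (by linarith) : (0:ℝ) ≤ (α - 1)⁻¹))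

lemma renyiDiv_self (hα : 1 < α) {P : X → ℝ≥0∞} (hP : IsPMF P) :
    renyiDiv α P P = 0 := by
  rw [renyiDiv, sum_self_eq_one hα hP, ENNReal.log_one, mul_zero]

lemma one_le_sum_bool (hα : 1 < α) {P Q : Bool → ℝ≥0∞} (hP : IsPMF P) (hQ : IsPMF Q) :
    1 ≤ ∑ x, P x ^ α * Q x ^ (1 - α) := by
  rw [Fintype.sum_bool]
  exact one_le_scalar hα (Fintype.sum_bool P ▸ hP) (Fintype.sum_bool Q ▸ hQ)

end Sums

section Approx

variable {α δ : ℝ}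

lemma isPMF_Ber_s8 {q : ℝ} (hq : q ∈ Set.Icc (0:ℝ) 1) : IsPMF (Ber q) := by
  rw [IsPMF, Fintype.sum_bool]
  simp only [Ber, Bool.false_eq_true, if_true, if_false]
  rw [← ENNReal.ofReal_add hq.1 (by linarith [hq.2])]
  norm_num

lemma isPMF_mix {T T' : ℝ≥0∞} (hT : T + T' = 1) {P Q : Bool → ℝ≥0∞}
    (hP : IsPMF P) (hQ : IsPMF Q) : IsPMF (fun x => T * P x + T' * Q x) := by
  rw [IsPMF, Finset.sum_add_distrib, ← Finset.mul_sum, ← Finset.mul_sum, hP, hQ,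
    mul_one, mul_one, hT]

lemma ofReal_add_ofReal_one_sub {t : ℝ} (ht0 : 0 ≤ t) (ht1 : t ≤ 1) :
    ENNReal.ofReal t + ENNReal.ofReal (1 - t) = 1 := by
  rw [← ENNReal.ofReal_add ht0 (by linarith)]
  norm_num

lemma Ber_mix {t p q₁ q₂ : ℝ} (ht0 : 0 ≤ t) (ht1 : t ≤ 1)
    (hp : p ∈ Set.Icc (0:ℝ) 1) (hq₁ : q₁ ∈ Set.Icc (0:ℝ) 1)
    (heq : q₂ = t * q₁ + (1 - t) * p) (x : Bool) :
    Ber q₂ x = ENNReal.ofReal t * Ber q₁ x + ENNReal.ofReal (1 - t) * Ber p x := by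
  cases x
  · simp only [Ber, Bool.false_eq_true, if_false]
    rw [← ENNReal.ofReal_mul ht0, ← ENNReal.ofReal_mul (by linarith),
      ← ENNReal.ofReal_add (by nlinarith [hq₁.2]) (by nlinarith [hp.2])]
    exact congrArg ENNReal.ofReal (by linarith)
  · simp only [Ber, if_true]
    rw [← ENNReal.ofReal_mul ht0, ← ENNReal.ofReal_mul (by linarith),
      ← ENNReal.ofReal_add (by nlinarith [hq₁.1]) (by nlinarith [hp.1])]
    exact congrArg ENNReal.ofReal (by linarith)

lemma approx_mono_snd (hα : 1 < α) {t p q₁ q₂ : ℝ} (ht0 : 0 ≤ t) (ht1 : t ≤ 1)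
    (hp : p ∈ Set.Icc (0:ℝ) 1) (hq₁ : q₁ ∈ Set.Icc (0:ℝ) 1)
    (heq : q₂ = t * q₁ + (1 - t) * p) :
    approxRenyiDiv α δ (Ber p) (Ber q₂) ≤ approxRenyiDiv α δ (Ber p) (Ber q₁) := by
  refine sInf_le_sInf_of_isCoinitialFor ?_
  rintro d ⟨P', P'', Q', Q'', h1, h2, h3, h4, h5, h6, rfl⟩
  set T := ENNReal.ofReal t with hTdef
  set T' := ENNReal.ofReal (1 - t) with hT'def
  have hTT : T + T' = 1 := ofReal_add_ofReal_one_sub ht0 ht1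
  refine ⟨renyiDiv α P' (fun x => T * Q' x + T' * P' x),
    ⟨P', P'', fun x => T * Q' x + T' * P' x, fun x => T * Q'' x + T' * P'' x,
      h1, h2, isPMF_mix hTT h3 h1, isPMF_mix hTT h4 h2, h5, ?_, rfl⟩, ?_⟩
  · intro x
    rw [Ber_mix ht0 ht1 hp hq₁ heq x, h6 x, h5 x]
    ring
  · exact renyiDiv_mono hα (sumA hα h1 h3 hTT (one_le_sum_bool hα h1 h3))

lemma approx_mono_fst (hα : 1 < α) {t p q₁ q₂ : ℝ} (ht0 : 0 ≤ t) (ht1 : t ≤ 1)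
    (hp : p ∈ Set.Icc (0:ℝ) 1) (hq₁ : q₁ ∈ Set.Icc (0:ℝ) 1)
    (heq : q₂ = t * q₁ + (1 - t) * p) :
    approxRenyiDiv α δ (Ber q₂) (Ber p) ≤ approxRenyiDiv α δ (Ber q₁) (Ber p) := by
  refine sInf_le_sInf_of_isCoinitialFor ?_
  rintro d ⟨P', P'', Q', Q'', h1, h2, h3, h4, h5, h6, rfl⟩
  set T := ENNReal.ofReal t with hTdef
  set T' := ENNReal.ofReal (1 - t) with hT'def
  have hTT : T + T' = 1 := ofReal_add_ofReal_one_sub ht0 ht1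
  refine ⟨renyiDiv α (fun x => T * P' x + T' * Q' x) Q',
    ⟨fun x => T * P' x + T' * Q' x, fun x => T * P'' x + T' * Q'' x, Q', Q'',
      isPMF_mix hTT h1 h3, isPMF_mix hTT h2 h4, h3, h4, ?_, h6, rfl⟩, ?_⟩
  · intro x
    rw [Ber_mix ht0 ht1 hp hq₁ heq x, h5 x, h6 x]
    ring
  · exact renyiDiv_mono hα (sumB hα h1 h3 hTT (one_le_sum_bool hα h1 h3))

lemma approx_self_le (hα : 1 < α) (hδ : δ ∈ Set.Ico (0:ℝ) 1) {q ε : ℝ} (hε : 0 ≤ ε)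
    (hq : q ∈ Set.Icc (0:ℝ) 1) :
    approxRenyiDiv α δ (Ber q) (Ber q) ≤ (ε : EReal) := by
  have hBer := isPMF_Ber_s8 hq
  have hdec : ∀ x, Ber q x = ENNReal.ofReal (1 - δ) * Ber q x + ENNReal.ofReal δ * Ber q x := by
    intro x
    rw [← add_mul, add_comm, ofReal_add_ofReal_one_sub hδ.1 hδ.2.le, one_mul]
  refine le_trans (sInf_le ⟨Ber q, Ber q, Ber q, Ber q, hBer, hBer, hBer, hBer, hdec, hdec, rfl⟩) ?_
  rw [renyiDiv_self hα hBer]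
  exact_mod_cast hε

end Approx

/-- L is monotone on [0,1]. -/
theorem stmt8 (α ε δ : ℝ) (hα : 1 < α) (hε : 0 < ε) (hδ : δ ∈ Set.Ico (0:ℝ) 1)
    (q₁ q₂ : ℝ) (hq₁ : q₁ ∈ Set.Icc (0:ℝ) 1) (hq₂ : q₂ ∈ Set.Icc (0:ℝ) 1)
    (h : q₁ ≤ q₂) : Lfun α ε δ q₁ ≤ Lfun α ε δ q₂ := by
  set S₂ := {p : ℝ | p ∈ Set.Icc q₂ 1 ∧
    approxRenyiDiv α δ (Ber p) (Ber q₂) ≤ (ε : EReal) ∧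
    approxRenyiDiv α δ (Ber q₂) (Ber p) ≤ (ε : EReal)} with hS₂
  have hbdd : BddAbove S₂ := ⟨1, fun p hp => hp.1.2⟩
  have hmem : q₂ ∈ S₂ :=
    ⟨⟨le_refl _, hq₂.2⟩, approx_self_le hα hδ hε.le hq₂, approx_self_le hα hδ hε.le hq₂⟩
  have hle : q₂ ≤ sSup S₂ := le_csSup hbdd hmem
  rw [Lfun, Lfun, ← hS₂]
  refine Real.sSup_le ?_ (le_trans hq₂.1 hle)
  rintro p ⟨⟨hpq₁, hp1⟩, hd1, hd2⟩
  by_cases hcase : p ≤ q₂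
  · exact hcase.trans hle
  · push_neg at hcase
    have hden : (0:ℝ) < p - q₁ := by linarith
    set t := (p - q₂) / (p - q₁) with htdef
    have ht0 : 0 ≤ t := div_nonneg (by linarith) hden.le
    have ht1 : t ≤ 1 := (div_le_one hden).2 (by linarith)
    have htc : t * (p - q₁) = p - q₂ := div_mul_cancel₀ _ hden.ne'
    have heq : q₂ = t * q₁ + (1 - t) * p := by linear_combination htc
    have hp01 : p ∈ Set.Icc (0:ℝ) 1 := ⟨le_trans hq₁.1 hpq₁, hp1⟩
    have hpS₂ : p ∈ S₂ :=
      ⟨⟨hcase.le, hp1⟩,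
        le_trans (approx_mono_snd hα ht0 ht1 hp01 hq₁ heq) hd1,
        le_trans (approx_mono_fst hα ht0 ht1 hp01 hq₁ heq) hd2⟩
    exact le_csSup hbdd hpS₂
end

section
/- Define π*(0) = 0 and π*(n) = L(π*(n−1)) for n ≥ 1, where L(q) = max{ p ∈ [q,1] : D_α^δ(Ber(p)‖Ber(q)) ≤ ε and D_α^δ(Ber(q)‖Ber(p)) ≤ ε }. Then for any function π : ℤ_{≥0} → [0,1] with π(0) = 0 such that for all n ≥ 1 both D_α^δ(Ber(π(n))‖Ber(π(n−1))) ≤ ε and D_α^δ(Ber(π(n−1))‖Ber(π(n))) ≤ ε hold, we have π(n) ≤ π*(n) for all n. -/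
open scoped ENNReal

/-- π*(0) = 0 and π*(n) = L(π*(n−1)). -/
noncomputable def piStar (α ε δ : ℝ) : ℕ → ℝ
  | 0 => 0
  | n + 1 => Lfun α ε δ (piStar α ε δ n)

lemma real_neg_convex {q : ℝ} (hq : q < 0) {a b t : ℝ} (ha : 0 < a) (hb : 0 < b)
    (ht0 : 0 < t) (ht1 : t < 1) :
    (t * a + (1 - t) * b) ^ q ≤ t * a ^ q + (1 - t) * b ^ q := by
  set s := 1 - t with hs_def
  have hs : 0 < s := by simp only [hs_def]; linarith
  set A := t * a + s * b with hA_def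
  set B := t * a ^ q + s * b ^ q with hB_def
  have haq : (0:ℝ) < a ^ q := Real.rpow_pos_of_pos ha q
  have hbq : (0:ℝ) < b ^ q := Real.rpow_pos_of_pos hb q
  have hA : 0 < A := by positivity
  have hB : 0 < B := by positivity
  have h1q : (0:ℝ) < 1 - q := by linarith
  set lam := -q / (1 - q) with hlam_def
  set mu := 1 / (1 - q) with hmu_def
  have hlam : 0 < lam := div_pos (by linarith) h1q
  have hmu : 0 < mu := by positivity
  have hlm : lam + mu = 1 := by rw [hlam_def, hmu_def, ← add_div, div_eq_one_iff_eq h1q.ne']; ring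
  have hexp : lam + q * mu = 0 := by
    simp only [hlam_def, hmu_def]; field_simp; ring
  have key : ∀ z : ℝ, 0 < z → (t * z / A) ^ lam * (t * z ^ q / B) ^ mu
      = t / (A ^ lam * B ^ mu) := by
    intro z hz
    have hzq : (0:ℝ) < z ^ q := Real.rpow_pos_of_pos hz q
    rw [Real.div_rpow (by positivity) hA.le, Real.div_rpow (by positivity) hB.le,
      Real.mul_rpow ht0.le hz.le, Real.mul_rpow ht0.le hzq.le]
    have e1 : t ^ lam * z ^ lam / A ^ lam * (t ^ mu * (z ^ q) ^ mu / B ^ mu)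
        = t ^ lam * t ^ mu * (z ^ lam * z ^ (q * mu)) / (A ^ lam * B ^ mu) := by
      rw [← Real.rpow_mul hz.le]; ring
    rw [e1, ← Real.rpow_add ht0, ← Real.rpow_add hz, hlm, hexp, Real.rpow_one,
      Real.rpow_zero, mul_one]
  have k1 := Real.geom_mean_le_arith_mean2_weighted hlam.le hmu.le
    (by positivity : (0:ℝ) ≤ t * a / A) (by positivity : (0:ℝ) ≤ t * a ^ q / B) hlm
  have k2 := Real.geom_mean_le_arith_mean2_weighted hlam.le hmu.le
    (by positivity : (0:ℝ) ≤ s * b / A) (by positivity : (0:ℝ) ≤ s * b ^ q / B) hlm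
  have key2 : ∀ z : ℝ, 0 < z → (s * z / A) ^ lam * (s * z ^ q / B) ^ mu
      = s / (A ^ lam * B ^ mu) := by
    intro z hz
    have hzq : (0:ℝ) < z ^ q := Real.rpow_pos_of_pos hz q
    rw [Real.div_rpow (by positivity) hA.le, Real.div_rpow (by positivity) hB.le,
      Real.mul_rpow hs.le hz.le, Real.mul_rpow hs.le hzq.le]
    have e1 : s ^ lam * z ^ lam / A ^ lam * (s ^ mu * (z ^ q) ^ mu / B ^ mu)
        = s ^ lam * s ^ mu * (z ^ lam * z ^ (q * mu)) / (A ^ lam * B ^ mu) := by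
      rw [← Real.rpow_mul hz.le]; ring
    rw [e1, ← Real.rpow_add hs, ← Real.rpow_add hz, hlm, hexp, Real.rpow_one,
      Real.rpow_zero, mul_one]
  rw [key a ha] at k1
  rw [key2 b hb] at k2
  have hAB : 0 < A ^ lam * B ^ mu := by positivity
  have hsum : 1 / (A ^ lam * B ^ mu) ≤ 1 := by
    have : t / (A ^ lam * B ^ mu) + s / (A ^ lam * B ^ mu)
        ≤ (lam * (t * a / A) + mu * (t * a ^ q / B))
          + (lam * (s * b / A) + mu * (s * b ^ q / B)) := add_le_add k1 k2
    calc 1 / (A ^ lam * B ^ mu) = t / (A ^ lam * B ^ mu) + s / (A ^ lam * B ^ mu) := by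
          rw [← add_div]; congr 1; simp [hs_def]
      _ ≤ (lam * (t * a / A) + mu * (t * a ^ q / B))
          + (lam * (s * b / A) + mu * (s * b ^ q / B)) := this
      _ = lam * ((t * a + s * b) / A) + mu * ((t * a ^ q + s * b ^ q) / B) := by ring
      _ = 1 := by rw [← hA_def, ← hB_def, div_self hA.ne', div_self hB.ne']; linarith
  have hone : 1 ≤ A ^ lam * B ^ mu := by
    rwa [div_le_one hAB] at hsum
  have hpow : (1:ℝ) ≤ (A ^ lam * B ^ mu) ^ (1 - q) := by
    calc (1:ℝ) = 1 ^ (1 - q) := (Real.one_rpow _).symm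
      _ ≤ (A ^ lam * B ^ mu) ^ (1 - q) :=
        Real.rpow_le_rpow zero_le_one hone h1q.le
  have hexpand : (A ^ lam * B ^ mu) ^ (1 - q) = A ^ (-q) * B := by
    rw [Real.mul_rpow (by positivity) (by positivity), ← Real.rpow_mul hA.le,
      ← Real.rpow_mul hB.le]
    congr 1
    · congr 1; rw [hlam_def, div_mul_cancel₀ _ h1q.ne']
    · rw [show mu * (1 - q) = 1 by rw [hmu_def, div_mul_cancel₀ _ h1q.ne'], Real.rpow_one]
  rw [hexpand] at hpow
  have hAnq : 0 < A ^ (-q) := Real.rpow_pos_of_pos hA _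
  have hAq : A ^ q = (A ^ (-q))⁻¹ := by
    rw [← Real.rpow_neg hA.le, neg_neg]
  rw [hAq, inv_eq_one_div, div_le_iff₀ hAnq, mul_comm]
  exact hpow

lemma ennreal_mix_rpow_neg {q : ℝ} (hq : q < 0) {t : ℝ} (ht0 : 0 ≤ t) (ht1 : t ≤ 1)
    (z₁ z₂ : ℝ≥0∞) :
    (ENNReal.ofReal t * z₁ + ENNReal.ofReal (1 - t) * z₂) ^ q
      ≤ ENNReal.ofReal t * z₁ ^ q + ENNReal.ofReal (1 - t) * z₂ ^ q := by
  rcases eq_or_lt_of_le ht0 with h0 | h0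
  · simp [← h0]
  rcases eq_or_lt_of_le ht1 with h1 | h1
  · simp [h1]
  have hto : (0:ℝ≥0∞) < ENNReal.ofReal t := ENNReal.ofReal_pos.2 h0
  have hso : (0:ℝ≥0∞) < ENNReal.ofReal (1 - t) := ENNReal.ofReal_pos.2 (by linarith)
  rcases eq_or_ne z₁ 0 with rfl | hz₁
  · rw [ENNReal.zero_rpow_of_neg hq]
    simp [ENNReal.mul_top hto.ne']
  rcases eq_or_ne z₂ 0 with rfl | hz₂
  · rw [ENNReal.zero_rpow_of_neg hq]
    simp [ENNReal.mul_top hso.ne']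
  rcases eq_or_ne z₁ ⊤ with rfl | hz₁t
  · rw [ENNReal.mul_top hto.ne']
    simp [ENNReal.top_rpow_of_neg hq]
  rcases eq_or_ne z₂ ⊤ with rfl | hz₂t
  · rw [ENNReal.mul_top hso.ne']
    simp [ENNReal.top_rpow_of_neg hq]
  -- all finite positive
  have hz₁p : 0 < z₁.toReal := ENNReal.toReal_pos hz₁ hz₁t
  have hz₂p : 0 < z₂.toReal := ENNReal.toReal_pos hz₂ hz₂t
  have e₁ : z₁ = ENNReal.ofReal z₁.toReal := (ENNReal.ofReal_toReal hz₁t).symm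
  have e₂ : z₂ = ENNReal.ofReal z₂.toReal := (ENNReal.ofReal_toReal hz₂t).symm
  have hs0 : (0:ℝ) < 1 - t := by linarith
  rw [e₁, e₂, ← ENNReal.ofReal_mul ht0, ← ENNReal.ofReal_mul hs0.le,
    ← ENNReal.ofReal_add (mul_nonneg ht0 hz₁p.le) (mul_nonneg hs0.le hz₂p.le),
    ENNReal.ofReal_rpow_of_pos (add_pos (mul_pos h0 hz₁p) (mul_pos hs0 hz₂p)),
    ENNReal.ofReal_rpow_of_pos hz₁p, ENNReal.ofReal_rpow_of_pos hz₂p,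
    ← ENNReal.ofReal_mul ht0, ← ENNReal.ofReal_mul hs0.le,
    ← ENNReal.ofReal_add (mul_nonneg ht0 (Real.rpow_nonneg hz₁p.le _))
      (mul_nonneg hs0.le (Real.rpow_nonneg hz₂p.le _))]
  exact ENNReal.ofReal_le_ofReal (real_neg_convex hq hz₁p hz₂p h0 h1)

lemma ennreal_mix_rpow_pos {r : ℝ} (hr : 1 ≤ r) {t : ℝ} (ht0 : 0 ≤ t) (ht1 : t ≤ 1)
    (z₁ z₂ : ℝ≥0∞) :
    (ENNReal.ofReal t * z₁ + ENNReal.ofReal (1 - t) * z₂) ^ r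
      ≤ ENNReal.ofReal t * z₁ ^ r + ENNReal.ofReal (1 - t) * z₂ ^ r := by
  have hw : ∑ b : Bool, (if b then ENNReal.ofReal t else ENNReal.ofReal (1 - t)) = 1 := by
    rw [Fintype.sum_bool]
    norm_num
    rw [← ENNReal.ofReal_add ht0 (by linarith), add_sub_cancel, ENNReal.ofReal_one]
  have h := ENNReal.rpow_arith_mean_le_arith_mean_rpow Finset.univ
    (fun b : Bool => if b then ENNReal.ofReal t else ENNReal.ofReal (1 - t))
    (fun b : Bool => if b then z₁ else z₂) hw hr
  simpa [Fintype.sum_bool] using h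

lemma pmf_ne_top_s9 {P : Bool → ℝ≥0∞} (hP : IsPMF P) (x : Bool) : P x ≠ ⊤ := by
  have h : P x ≤ 1 := by
    rw [← hP]
    exact Finset.single_le_sum (fun i _ => zero_le) (Finset.mem_univ x)
  exact (h.trans_lt ENNReal.one_lt_top).ne

lemma rpow_self_cancel {α : ℝ} (hα : 1 < α) {a : ℝ≥0∞} (ha : a ≠ ⊤) :
    a ^ α * a ^ (1 - α) = a := by
  rcases eq_or_ne a 0 with rfl | h0
  · rw [ENNReal.zero_rpow_of_pos (by linarith), zero_mul]
  · rw [← ENNReal.rpow_add α (1 - α) h0 ha, add_sub_cancel, ENNReal.rpow_one]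

lemma ereal_scale_le {c : ℝ} (hc : 0 ≤ c) {S S' : ℝ≥0∞} {t : ℝ} (ht0 : 0 ≤ t) (ht1 : t ≤ 1)
    (h : S' ≤ ENNReal.ofReal t * S + ENNReal.ofReal (1 - t) * 1) :
    (c : EReal) * ENNReal.log S' ≤ max ((c : EReal) * ENNReal.log S) 0 := by
  have hmax : S' ≤ max S 1 := by
    refine h.trans ?_
    calc ENNReal.ofReal t * S + ENNReal.ofReal (1 - t) * 1
        ≤ ENNReal.ofReal t * max S 1 + ENNReal.ofReal (1 - t) * max S 1 :=
          add_le_add (mul_le_mul_right (le_max_left _ _) _)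
            (mul_le_mul_right (le_max_right _ _) _)
      _ = (ENNReal.ofReal t + ENNReal.ofReal (1 - t)) * max S 1 := (add_mul _ _ _).symm
      _ = max S 1 := by
          rw [← ENNReal.ofReal_add ht0 (by linarith), add_sub_cancel, ENNReal.ofReal_one,
            one_mul]
  have hc' : (0 : EReal) ≤ (c : EReal) := by exact_mod_cast hc
  have hmono : Monotone (fun z : EReal => (c : EReal) * z) :=
    fun z w hzw => mul_le_mul_of_nonneg_left hzw hc'
  calc (c : EReal) * ENNReal.log S' ≤ (c : EReal) * ENNReal.log (max S 1) :=
        mul_le_mul_of_nonneg_left (ENNReal.log_monotone hmax) hc'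
    _ = (c : EReal) * max (ENNReal.log S) (ENNReal.log 1) := by
        rw [ENNReal.log_monotone.map_max]
    _ = max ((c : EReal) * ENNReal.log S) ((c : EReal) * ENNReal.log 1) := hmono.map_max
    _ = max ((c : EReal) * ENNReal.log S) 0 := by rw [ENNReal.log_one, mul_zero]

lemma renyi_mix_right {α : ℝ} (hα : 1 < α) {P Q : Bool → ℝ≥0∞} (hP : IsPMF P) (hQ : IsPMF Q)
    {t : ℝ} (ht0 : 0 ≤ t) (ht1 : t ≤ 1) :
    renyiDiv α P (fun x => ENNReal.ofReal t * Q x + ENNReal.ofReal (1 - t) * P x)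
      ≤ max (renyiDiv α P Q) 0 := by
  have hc : (0:ℝ) ≤ (α - 1)⁻¹ := by
    have : (0:ℝ) < α - 1 := by linarith
    positivity
  unfold renyiDiv
  refine ereal_scale_le hc ht0 ht1 ?_
  calc ∑ x, P x ^ α * (ENNReal.ofReal t * Q x + ENNReal.ofReal (1 - t) * P x) ^ (1 - α)
      ≤ ∑ x, (ENNReal.ofReal t * (P x ^ α * Q x ^ (1 - α)) + ENNReal.ofReal (1 - t) * P x) := by
        refine Finset.sum_le_sum fun x _ => ?_
        calc P x ^ α * (ENNReal.ofReal t * Q x + ENNReal.ofReal (1 - t) * P x) ^ (1 - α)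
            ≤ P x ^ α * (ENNReal.ofReal t * Q x ^ (1 - α)
                + ENNReal.ofReal (1 - t) * P x ^ (1 - α)) :=
              mul_le_mul_right (ennreal_mix_rpow_neg (by linarith) ht0 ht1 _ _) _
          _ = ENNReal.ofReal t * (P x ^ α * Q x ^ (1 - α))
              + ENNReal.ofReal (1 - t) * (P x ^ α * P x ^ (1 - α)) := by ring
          _ = ENNReal.ofReal t * (P x ^ α * Q x ^ (1 - α)) + ENNReal.ofReal (1 - t) * P x := by
              rw [rpow_self_cancel hα (pmf_ne_top_s9 hP x)]
    _ = ENNReal.ofReal t * (∑ x, P x ^ α * Q x ^ (1 - α)) + ENNReal.ofReal (1 - t) * 1 := by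
        rw [Finset.sum_add_distrib, ← Finset.mul_sum, ← Finset.mul_sum, hP]

lemma renyi_mix_left {α : ℝ} (hα : 1 < α) {P Q : Bool → ℝ≥0∞} (hP : IsPMF P) (hQ : IsPMF Q)
    {t : ℝ} (ht0 : 0 ≤ t) (ht1 : t ≤ 1) :
    renyiDiv α (fun x => ENNReal.ofReal t * P x + ENNReal.ofReal (1 - t) * Q x) Q
      ≤ max (renyiDiv α P Q) 0 := by
  have hc : (0:ℝ) ≤ (α - 1)⁻¹ := by
    have : (0:ℝ) < α - 1 := by linarith
    positivity
  unfold renyiDiv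
  refine ereal_scale_le hc ht0 ht1 ?_
  calc ∑ x, (ENNReal.ofReal t * P x + ENNReal.ofReal (1 - t) * Q x) ^ α * Q x ^ (1 - α)
      ≤ ∑ x, (ENNReal.ofReal t * (P x ^ α * Q x ^ (1 - α)) + ENNReal.ofReal (1 - t) * Q x) := by
        refine Finset.sum_le_sum fun x _ => ?_
        calc (ENNReal.ofReal t * P x + ENNReal.ofReal (1 - t) * Q x) ^ α * Q x ^ (1 - α)
            ≤ (ENNReal.ofReal t * P x ^ α + ENNReal.ofReal (1 - t) * Q x ^ α)
                * Q x ^ (1 - α) :=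
              mul_le_mul_left (ennreal_mix_rpow_pos hα.le ht0 ht1 _ _) _
          _ = ENNReal.ofReal t * (P x ^ α * Q x ^ (1 - α))
              + ENNReal.ofReal (1 - t) * (Q x ^ α * Q x ^ (1 - α)) := by ring
          _ = ENNReal.ofReal t * (P x ^ α * Q x ^ (1 - α)) + ENNReal.ofReal (1 - t) * Q x := by
              rw [rpow_self_cancel hα (pmf_ne_top_s9 hQ x)]
    _ = ENNReal.ofReal t * (∑ x, P x ^ α * Q x ^ (1 - α)) + ENNReal.ofReal (1 - t) * 1 := by
        rw [Finset.sum_add_distrib, ← Finset.mul_sum, ← Finset.mul_sum, hQ]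

lemma Ber_isPMF {q : ℝ} (hq0 : 0 ≤ q) (hq1 : q ≤ 1) : IsPMF (Ber q) := by
  unfold IsPMF Ber
  rw [Fintype.sum_bool]
  norm_num
  rw [← ENNReal.ofReal_add hq0 (by linarith), add_sub_cancel, ENNReal.ofReal_one]

lemma Ber_ne_top (q : ℝ) (x : Bool) : Ber q x ≠ ⊤ := by
  unfold Ber; cases x <;> simp

lemma mix_pmf {A B : Bool → ℝ≥0∞} (hA : IsPMF A) (hB : IsPMF B) {t : ℝ}
    (ht0 : 0 ≤ t) (ht1 : t ≤ 1) :
    IsPMF (fun x => ENNReal.ofReal t * A x + ENNReal.ofReal (1 - t) * B x) := by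
  unfold IsPMF
  rw [Finset.sum_add_distrib, ← Finset.mul_sum, ← Finset.mul_sum, hA, hB, mul_one, mul_one,
    ← ENNReal.ofReal_add ht0 (by linarith), add_sub_cancel, ENNReal.ofReal_one]

lemma Ber_mix_s9 {q p q' t : ℝ} (hq0 : 0 ≤ q) (hq1 : q ≤ 1) (hp0 : 0 ≤ p) (hp1 : p ≤ 1)
    (ht0 : 0 ≤ t) (ht1 : t ≤ 1) (hid : t * q + (1 - t) * p = q') :
    ∀ x, Ber q' x = ENNReal.ofReal t * Ber q x + ENNReal.ofReal (1 - t) * Ber p x := by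
  intro x
  cases x
  · show ENNReal.ofReal (1 - q') = _
    have hid' : t * (1 - q) + (1 - t) * (1 - p) = 1 - q' := by
      have : t * (1 - q) + (1 - t) * (1 - p) = 1 - (t * q + (1 - t) * p) := by ring
      rw [this, hid]
    show ENNReal.ofReal (1 - q')
        = ENNReal.ofReal t * ENNReal.ofReal (1 - q) + ENNReal.ofReal (1 - t) * ENNReal.ofReal (1 - p)
    rw [← ENNReal.ofReal_mul ht0, ← ENNReal.ofReal_mul (by linarith),
      ← ENNReal.ofReal_add (mul_nonneg ht0 (by linarith)) (mul_nonneg (by linarith) (by linarith)),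
      hid']
  · show ENNReal.ofReal q'
        = ENNReal.ofReal t * ENNReal.ofReal q + ENNReal.ofReal (1 - t) * ENNReal.ofReal p
    rw [← ENNReal.ofReal_mul ht0, ← ENNReal.ofReal_mul (by linarith),
      ← ENNReal.ofReal_add (mul_nonneg ht0 hq0) (mul_nonneg (by linarith) hp0), hid]

lemma renyi_self {α : ℝ} (hα : 1 < α) {q : ℝ} (hq0 : 0 ≤ q) (hq1 : q ≤ 1) :
    renyiDiv α (Ber q) (Ber q) = 0 := by
  unfold renyiDiv
  have : ∀ x : Bool, Ber q x ^ α * Ber q x ^ (1 - α) = Ber q x := fun x =>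
    rpow_self_cancel hα (Ber_ne_top q x)
  rw [Finset.sum_congr rfl (fun x _ => this x), Ber_isPMF hq0 hq1, ENNReal.log_one, mul_zero]

lemma approx_self {α δ : ℝ} (hα : 1 < α) (hδ0 : 0 ≤ δ) (hδ1 : δ < 1) {q : ℝ}
    (hq0 : 0 ≤ q) (hq1 : q ≤ 1) {ε : ℝ} (hε : 0 < ε) :
    approxRenyiDiv α δ (Ber q) (Ber q) ≤ (ε : EReal) := by
  have hmix : ∀ x, Ber q x = ENNReal.ofReal (1 - δ) * Ber q x + ENNReal.ofReal δ * Ber q x := by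
    intro x
    rw [← add_mul, ← ENNReal.ofReal_add (by linarith) hδ0, sub_add_cancel,
      ENNReal.ofReal_one, one_mul]
  have hmem : (0 : EReal) ∈ { d : EReal | ∃ P' P'' Q' Q'' : Bool → ℝ≥0∞,
      IsPMF P' ∧ IsPMF P'' ∧ IsPMF Q' ∧ IsPMF Q'' ∧
      (∀ x, Ber q x = ENNReal.ofReal (1 - δ) * P' x + ENNReal.ofReal δ * P'' x) ∧
      (∀ x, Ber q x = ENNReal.ofReal (1 - δ) * Q' x + ENNReal.ofReal δ * Q'' x) ∧
      d = renyiDiv α P' Q' } := by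
    exact ⟨Ber q, Ber q, Ber q, Ber q, Ber_isPMF hq0 hq1, Ber_isPMF hq0 hq1,
      Ber_isPMF hq0 hq1, Ber_isPMF hq0 hq1, hmix, hmix, (renyi_self hα hq0 hq1).symm⟩
  calc approxRenyiDiv α δ (Ber q) (Ber q) ≤ 0 := sInf_le hmem
    _ ≤ (ε : EReal) := by exact_mod_cast hε.le

lemma transfer_right {α δ ε : ℝ} (hα : 1 < α) (hε : 0 < ε) (hδ0 : 0 ≤ δ) (hδ1 : δ < 1)
    {q q' p : ℝ} (hq0 : 0 ≤ q) (hqq' : q ≤ q') (hq'p : q' ≤ p) (hp1 : p ≤ 1)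
    (h : approxRenyiDiv α δ (Ber p) (Ber q) ≤ (ε : EReal)) :
    approxRenyiDiv α δ (Ber p) (Ber q') ≤ (ε : EReal) := by
  rcases eq_or_lt_of_le (hqq'.trans hq'p) with heq | hqp
  · have : q' = q := le_antisymm (hq'p.trans heq.ge) hqq'
    rwa [this]
  set t := (p - q') / (p - q) with ht_def
  have hpq : (0:ℝ) < p - q := by linarith
  have ht0 : 0 ≤ t := div_nonneg (by linarith) hpq.le
  have ht1 : t ≤ 1 := by rw [div_le_one hpq]; linarith
  have hid : t * q + (1 - t) * p = q' := by rw [ht_def]; field_simp; ring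
  have hmix := Ber_mix_s9 hq0 (by linarith) (hq0.trans (hqq'.trans hq'p)) hp1 ht0 ht1 hid
  by_contra hcon
  push_neg at hcon
  have hlt : approxRenyiDiv α δ (Ber p) (Ber q) < approxRenyiDiv α δ (Ber p) (Ber q') :=
    lt_of_le_of_lt h hcon
  obtain ⟨d, hd_mem, hd_lt⟩ := sInf_lt_iff.mp hlt
  obtain ⟨P', P'', Q', Q'', hP', hP'', hQ', hQ'', hPm, hQm, hd_eq⟩ := hd_mem
  set Q'n : Bool → ℝ≥0∞ := fun x => ENNReal.ofReal t * Q' x + ENNReal.ofReal (1 - t) * P' x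
    with hQ'n
  set Q''n : Bool → ℝ≥0∞ := fun x => ENNReal.ofReal t * Q'' x + ENNReal.ofReal (1 - t) * P'' x
    with hQ''n
  have hmem : renyiDiv α P' Q'n ∈ { d : EReal | ∃ A A' B B' : Bool → ℝ≥0∞,
      IsPMF A ∧ IsPMF A' ∧ IsPMF B ∧ IsPMF B' ∧
      (∀ x, Ber p x = ENNReal.ofReal (1 - δ) * A x + ENNReal.ofReal δ * A' x) ∧
      (∀ x, Ber q' x = ENNReal.ofReal (1 - δ) * B x + ENNReal.ofReal δ * B' x) ∧
      d = renyiDiv α A B } := by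
    refine ⟨P', P'', Q'n, Q''n, hP', hP'', mix_pmf hQ' hP' ht0 ht1,
      mix_pmf hQ'' hP'' ht0 ht1, hPm, ?_, rfl⟩
    intro x
    rw [hmix x, hPm x, hQm x]
    simp only [hQ'n, hQ''n]
    ring
  have hle : approxRenyiDiv α δ (Ber p) (Ber q') ≤ renyiDiv α P' Q'n := sInf_le hmem
  have hbound : renyiDiv α P' Q'n ≤ max d 0 := by
    rw [hd_eq]
    exact renyi_mix_right hα hP' hQ' ht0 ht1
  rcases le_or_gt d 0 with hd0 | hd0
  · have h0 : approxRenyiDiv α δ (Ber p) (Ber q') ≤ 0 := by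
      rw [max_eq_right hd0] at hbound
      exact hle.trans hbound
    have : (0 : EReal) < (ε : EReal) := by exact_mod_cast hε
    exact absurd h0 (not_le.mpr (this.trans hcon))
  · rw [max_eq_left hd0.le] at hbound
    exact absurd (hle.trans hbound) (not_le.mpr hd_lt)

lemma transfer_left {α δ ε : ℝ} (hα : 1 < α) (hε : 0 < ε) (hδ0 : 0 ≤ δ) (hδ1 : δ < 1)
    {q q' p : ℝ} (hq0 : 0 ≤ q) (hqq' : q ≤ q') (hq'p : q' ≤ p) (hp1 : p ≤ 1)
    (h : approxRenyiDiv α δ (Ber q) (Ber p) ≤ (ε : EReal)) :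
    approxRenyiDiv α δ (Ber q') (Ber p) ≤ (ε : EReal) := by
  rcases eq_or_lt_of_le (hqq'.trans hq'p) with heq | hqp
  · have : q' = q := le_antisymm (hq'p.trans heq.ge) hqq'
    rwa [this]
  set t := (p - q') / (p - q) with ht_def
  have hpq : (0:ℝ) < p - q := by linarith
  have ht0 : 0 ≤ t := div_nonneg (by linarith) hpq.le
  have ht1 : t ≤ 1 := by rw [div_le_one hpq]; linarith
  have hid : t * q + (1 - t) * p = q' := by rw [ht_def]; field_simp; ring
  have hmix := Ber_mix_s9 hq0 (by linarith) (hq0.trans (hqq'.trans hq'p)) hp1 ht0 ht1 hid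
  by_contra hcon
  push_neg at hcon
  have hlt : approxRenyiDiv α δ (Ber q) (Ber p) < approxRenyiDiv α δ (Ber q') (Ber p) :=
    lt_of_le_of_lt h hcon
  obtain ⟨d, hd_mem, hd_lt⟩ := sInf_lt_iff.mp hlt
  obtain ⟨P', P'', Q', Q'', hP', hP'', hQ', hQ'', hPm, hQm, hd_eq⟩ := hd_mem
  set P'n : Bool → ℝ≥0∞ := fun x => ENNReal.ofReal t * P' x + ENNReal.ofReal (1 - t) * Q' x
    with hP'n
  set P''n : Bool → ℝ≥0∞ := fun x => ENNReal.ofReal t * P'' x + ENNReal.ofReal (1 - t) * Q'' x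
    with hP''n
  have hmem : renyiDiv α P'n Q' ∈ { d : EReal | ∃ A A' B B' : Bool → ℝ≥0∞,
      IsPMF A ∧ IsPMF A' ∧ IsPMF B ∧ IsPMF B' ∧
      (∀ x, Ber q' x = ENNReal.ofReal (1 - δ) * A x + ENNReal.ofReal δ * A' x) ∧
      (∀ x, Ber p x = ENNReal.ofReal (1 - δ) * B x + ENNReal.ofReal δ * B' x) ∧
      d = renyiDiv α A B } := by
    refine ⟨P'n, P''n, Q', Q'', mix_pmf hP' hQ' ht0 ht1, mix_pmf hP'' hQ'' ht0 ht1,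
      hQ', hQ'', ?_, hQm, rfl⟩
    intro x
    rw [hmix x, hPm x, hQm x]
    simp only [hP'n, hP''n]
    ring
  have hle : approxRenyiDiv α δ (Ber q') (Ber p) ≤ renyiDiv α P'n Q' := sInf_le hmem
  have hbound : renyiDiv α P'n Q' ≤ max d 0 := by
    rw [hd_eq]
    exact renyi_mix_left hα hP' hQ' ht0 ht1
  rcases le_or_gt d 0 with hd0 | hd0
  · have h0 : approxRenyiDiv α δ (Ber q') (Ber p) ≤ 0 := by
      rw [max_eq_right hd0] at hbound
      exact hle.trans hbound
    have : (0 : EReal) < (ε : EReal) := by exact_mod_cast hε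
    exact absurd h0 (not_le.mpr (this.trans hcon))
  · rw [max_eq_left hd0.le] at hbound
    exact absurd (hle.trans hbound) (not_le.mpr hd_lt)

lemma feasible_bdd (α ε δ q : ℝ) : BddAbove {p : ℝ | p ∈ Set.Icc q 1 ∧
    approxRenyiDiv α δ (Ber p) (Ber q) ≤ (ε : EReal) ∧
    approxRenyiDiv α δ (Ber q) (Ber p) ≤ (ε : EReal)} :=
  ⟨1, fun _ hx => hx.1.2⟩

lemma Lfun_ge {α ε δ : ℝ} (hα : 1 < α) (hε : 0 < ε) (hδ0 : 0 ≤ δ) (hδ1 : δ < 1)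
    {q : ℝ} (hq0 : 0 ≤ q) (hq1 : q ≤ 1) : q ≤ Lfun α ε δ q :=
  le_csSup (feasible_bdd α ε δ q)
    ⟨⟨le_refl q, hq1⟩, approx_self hα hδ0 hδ1 hq0 hq1 hε, approx_self hα hδ0 hδ1 hq0 hq1 hε⟩

lemma Lfun_le_one (α ε δ q : ℝ) : Lfun α ε δ q ≤ 1 :=
  Real.sSup_le (fun _ hx => hx.1.2) zero_le_one

lemma piStar_mem {α ε δ : ℝ} (hα : 1 < α) (hε : 0 < ε) (hδ0 : 0 ≤ δ) (hδ1 : δ < 1) :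
    ∀ n, piStar α ε δ n ∈ Set.Icc (0:ℝ) 1 := by
  intro n
  induction n with
  | zero => exact ⟨le_refl 0, zero_le_one⟩
  | succ n ih =>
    constructor
    · exact ih.1.trans (Lfun_ge hα hε hδ0 hδ1 ih.1 ih.2)
    · exact Lfun_le_one α ε δ _

/-- π* dominates every partition selection primitive satisfying the approximate RDP
constraint. -/
theorem stmt9 (α ε δ : ℝ) (hα : 1 < α) (hε : 0 < ε) (hδ : δ ∈ Set.Ico (0:ℝ) 1)
    (π : ℕ → ℝ) (hπrange : ∀ n, π n ∈ Set.Icc (0:ℝ) 1) (hπ0 : π 0 = 0)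
    (hpriv : ∀ n : ℕ,
      approxRenyiDiv α δ (Ber (π (n + 1))) (Ber (π n)) ≤ (ε : EReal) ∧
      approxRenyiDiv α δ (Ber (π n)) (Ber (π (n + 1))) ≤ (ε : EReal)) :
    ∀ n, π n ≤ piStar α ε δ n := by
  obtain ⟨hδ0, hδ1⟩ := hδ
  intro n
  induction n with
  | zero => rw [hπ0]; exact le_refl _
  | succ n ih =>
    have hmem := piStar_mem hα hε hδ0 hδ1 n
    show π (n + 1) ≤ Lfun α ε δ (piStar α ε δ n)
    rcases le_or_gt (π (n + 1)) (piStar α ε δ n) with hle | hgt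
    · exact hle.trans (Lfun_ge hα hε hδ0 hδ1 hmem.1 hmem.2)
    · have hp1 : π (n + 1) ≤ 1 := (hπrange (n + 1)).2
      have h1 := transfer_right hα hε hδ0 hδ1 (hπrange n).1 ih hgt.le hp1 (hpriv n).1
      have h2 := transfer_left hα hε hδ0 hδ1 (hπrange n).1 ih hgt.le hp1 (hpriv n).2
      exact le_csSup (feasible_bdd α ε δ _) ⟨⟨hgt.le, hp1⟩, h1, h2⟩
end

section
/- Let P be a probability distribution on ℤ that is symmetric about some point c (i.e., P(c + k) = P(c − k), where c may be a half-integer meaning P(x) = P(2c − x) for all x ∈ ℤ), and let Q be its shift by one: Q(x) = P(x−1). Then for all α > 1 and δ ∈ [0,1), D_α^δ(P‖Q) = D_α^δ(Q‖P). -/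
open scoped ENNReal

/-- Rényi divergence of order α between distributions on ℤ, with the convention
`0 ^ (1-α) = ∞` for α > 1. -/
noncomputable def renyiDivZ (α : ℝ) (P Q : ℤ → ℝ≥0∞) : EReal :=
  ((α - 1)⁻¹ : ℝ) * ENNReal.log (∑' x, P x ^ α * Q x ^ (1 - α))

/-- `P` is a probability mass function on ℤ. -/
def IsPMFZ (P : ℤ → ℝ≥0∞) : Prop := ∑' x, P x = 1

/-- δ-approximate Rényi divergence of order α for distributions on ℤ. -/
noncomputable def approxRenyiDivZ (α δ : ℝ) (P Q : ℤ → ℝ≥0∞) : EReal :=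
  sInf { d : EReal | ∃ P' P'' Q' Q'' : ℤ → ℝ≥0∞,
    IsPMFZ P' ∧ IsPMFZ P'' ∧ IsPMFZ Q' ∧ IsPMFZ Q'' ∧
    (∀ x, P x = ENNReal.ofReal (1 - δ) * P' x + ENNReal.ofReal δ * P'' x) ∧
    (∀ x, Q x = ENNReal.ofReal (1 - δ) * Q' x + ENNReal.ofReal δ * Q'' x) ∧
    d = renyiDivZ α P' Q' }

lemma pmf_comp (e : ℤ ≃ ℤ) (P : ℤ → ℝ≥0∞) (h : IsPMFZ P) : IsPMFZ (fun x => P (e x)) := by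
  unfold IsPMFZ at *
  rw [e.tsum_eq P] at *; exact h

lemma renyi_comp (e : ℤ ≃ ℤ) (α : ℝ) (P Q : ℤ → ℝ≥0∞) :
    renyiDivZ α (fun x => P (e x)) (fun x => Q (e x)) = renyiDivZ α P Q := by
  unfold renyiDivZ
  rw [e.tsum_eq (fun x => P x ^ α * Q x ^ (1 - α))]

lemma subset_aux (e : ℤ ≃ ℤ) (P Q : ℤ → ℝ≥0∞) (hPQ : ∀ x, P (e x) = Q x)
    (hQP : ∀ x, Q (e x) = P x) (α δ : ℝ) (d : EReal)
    (hd : d ∈ { d : EReal | ∃ P' P'' Q' Q'' : ℤ → ℝ≥0∞,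
      IsPMFZ P' ∧ IsPMFZ P'' ∧ IsPMFZ Q' ∧ IsPMFZ Q'' ∧
      (∀ x, P x = ENNReal.ofReal (1 - δ) * P' x + ENNReal.ofReal δ * P'' x) ∧
      (∀ x, Q x = ENNReal.ofReal (1 - δ) * Q' x + ENNReal.ofReal δ * Q'' x) ∧
      d = renyiDivZ α P' Q' }) :
    d ∈ { d : EReal | ∃ P' P'' Q' Q'' : ℤ → ℝ≥0∞,
      IsPMFZ P' ∧ IsPMFZ P'' ∧ IsPMFZ Q' ∧ IsPMFZ Q'' ∧
      (∀ x, Q x = ENNReal.ofReal (1 - δ) * P' x + ENNReal.ofReal δ * P'' x) ∧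
      (∀ x, P x = ENNReal.ofReal (1 - δ) * Q' x + ENNReal.ofReal δ * Q'' x) ∧
      d = renyiDivZ α P' Q' } := by
  obtain ⟨P', P'', Q', Q'', h1, h2, h3, h4, h5, h6, h7⟩ := hd
  exact ⟨fun x => P' (e x), fun x => P'' (e x), fun x => Q' (e x), fun x => Q'' (e x),
    pmf_comp e P' h1, pmf_comp e P'' h2, pmf_comp e Q' h3, pmf_comp e Q'' h4,
    fun x => by rw [← hPQ x]; exact h5 (e x),
    fun x => by rw [← hQP x]; exact h6 (e x),
    by rw [h7, renyi_comp]⟩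

/-- If P on ℤ is symmetric about the (possibly half-integer) point c = m/2, i.e.
P(x) = P(m − x) for all x, and Q is P shifted by one, then the δ-approximate Rényi
divergence is symmetric: D_α^δ(P‖Q) = D_α^δ(Q‖P). -/
theorem stmt12 (P : ℤ → ℝ≥0∞) (hP : IsPMFZ P) (m : ℤ) (hsym : ∀ x, P x = P (m - x))
    (α δ : ℝ) (hα : 1 < α) (hδ : δ ∈ Set.Ico (0:ℝ) 1) :
    approxRenyiDivZ α δ P (fun x => P (x - 1))
      = approxRenyiDivZ α δ (fun x => P (x - 1)) P := by
  set Q : ℤ → ℝ≥0∞ := fun x => P (x - 1) with hQdef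
  let e : ℤ ≃ ℤ := Equiv.subLeft (m + 1)
  have hPQ : ∀ x, P (e x) = Q x := by
    intro x
    have : P (m + 1 - x) = P (x - 1) := by
      rw [hsym (m + 1 - x)]; congr 1; ring
    simpa [e, Equiv.subLeft, hQdef] using this
  have hQP : ∀ x, Q (e x) = P x := by
    intro x
    have : P (m + 1 - x - 1) = P x := by
      rw [hsym (m + 1 - x - 1)]; congr 1; ring
    simpa [e, Equiv.subLeft, hQdef] using this
  unfold approxRenyiDivZ
  congr 1
  ext d
  constructor
  · exact subset_aux e P Q hPQ hQP α δ d
  · refine subset_aux e.symm Q P ?_ ?_ α δ d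
    · intro x
      have := hPQ (e.symm x); simp at this; exact this.symm
    · intro x
      have := hQP (e.symm x); simp at this; exact this.symm
end
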